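/- arXiv:1306.3916 — 10 statements merged into one kernel-verified Lean document; each statement's English description precedes it below -/
import Mathlib

section
/- For every natural number d ≥ 1, any finite graph G whose chromatic number is at most d can be realized as a (unit) distance graph in R^{2d}; that is, there exists an injective map f from the vertices of G into R^{2d} such that every edge (u,v) of G satisfies |f(u) - f(v)| = 1. -/
/-!
Colour the vertices with `d` colours and give each colour class its own plane, the planes
being pairwise orthogonal. Inside its plane a vertex is placed on the circle of radius
`1 / √2`, distinct vertices of a class at distinct points. Two adjacent vertices have
different colours, so their positions are orthogonal vectors of squared length `1 / 2`,
at distance `1` by Pythagoras.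
-/

open Metric Function

namespace PiLp

variable {ι : Type*} [Fintype ι] [DecidableEq ι] {β : ι → Type*}
  [∀ i, SeminormedAddCommGroup (β i)]

theorem norm_sq_single_sub_single {i j : ι} (hij : i ≠ j) (x : β i) (y : β j) :
    ‖single 2 i x - single 2 j y‖ ^ 2 = ‖x‖ ^ 2 + ‖y‖ ^ 2 := by
  rw [norm_sq_eq_of_L2, Fintype.sum_eq_add i j hij]
  · simp [hij, hij.symm]
  · intro k ⟨hki, hkj⟩
    simp [hki, hkj]

end PiLp

theorem Set.Infinite.exists_injective_mapsTo {α V : Type*} [Finite V] {s : Set α}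
    (hs : s.Infinite) :
    ∃ f : V → α, Injective f ∧ ∀ v, f v ∈ s := by
  obtain ⟨n, ⟨e⟩⟩ := Finite.exists_equiv_fin V
  let g : V ↪ s := e.toEmbedding.trans (Fin.valEmbedding.trans (hs.natEmbedding s))
  exact ⟨(↑) ∘ g, Subtype.val_injective.comp g.injective, fun v => (g v).2⟩

theorem Complex.infinite_sphere_zero {r : ℝ} (hr : 0 < r) : (sphere (0 : ℂ) r).Infinite := by
  have hinj : Set.InjOn (fun t : ℝ => r * exp (t * I)) (Set.Icc 0 Real.pi) := by
    intro s hs t ht hst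
    apply Real.injOn_cos hs ht
    simpa [exp_ofReal_mul_I_re, hr.ne'] using congrArg re hst
  refine ((Set.Icc_infinite Real.pi_pos).image hinj).mono ?_
  rintro _ ⟨t, -, rfl⟩
  simp [norm_exp_ofReal_mul_I, abs_of_pos hr]

theorem exists_unit_distance_realization_piLp {V ι F : Type*} [Finite V]
    [Fintype ι] [SeminormedAddCommGroup F] {G : SimpleGraph V} (C : G.Coloring ι)
    (hF : (sphere (0 : F) √2⁻¹).Infinite) :
    ∃ f : V → PiLp 2 (fun _ : ι => F),
      Injective f ∧ ∀ u v, G.Adj u v → dist (f u) (f v) = 1 := by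
  classical
  obtain ⟨p, hp_inj, hp_norm⟩ := hF.exists_injective_mapsTo (V := V)
  let f (v : V) : PiLp 2 (fun _ : ι => F) := PiLp.single 2 (C v) (p v)
  have dist_eq_one {u v : V} (h : C u ≠ C v) : dist (f u) (f v) = 1 := by
    have hp_sq (v : V) : ‖p v‖ ^ 2 = 2⁻¹ := by
      rw [mem_sphere_zero_iff_norm.mp (hp_norm v), Real.sq_sqrt (by norm_num)]
    rw [dist_eq_norm, ← pow_eq_one_iff_of_nonneg (norm_nonneg _) two_ne_zero,
      PiLp.norm_sq_single_sub_single h, hp_sq, hp_sq]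
    norm_num
  refine ⟨f, fun u v huv => ?_, fun u v h => dist_eq_one (C.valid h)⟩
  by_cases h : C u = C v
  · apply hp_inj
    simpa [f, h] using congrArg (· (C v)) huv
  · simpa [huv] using dist_eq_one h

noncomputable def PiLp.complexLinearIsometryEquivEuclidean (d : ℕ) :
    PiLp 2 (fun _ : Fin d => ℂ) ≃ₗᵢ[ℝ] EuclideanSpace ℝ (Fin (2 * d)) :=
  ((Pi.orthonormalBasis fun _ : Fin d => Complex.orthonormalBasisOneI).reindex
    (Fintype.equivFinOfCardEq (by simp [mul_comm]))).repr

theorem stmt_0_general (d : ℕ) (V : Type) [Fintype V] (G : SimpleGraph V)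
    (hχ : G.chromaticNumber ≤ (d : ℕ∞)) :
    ∃ f : V → EuclideanSpace ℝ (Fin (2 * d)), Function.Injective f ∧
      ∀ u v : V, G.Adj u v → dist (f u) (f v) = 1 := by
  obtain ⟨C⟩ := SimpleGraph.chromaticNumber_le_iff_colorable.mp hχ
  obtain ⟨f, hf_inj, hf_dist⟩ :=
    exists_unit_distance_realization_piLp C (Complex.infinite_sphere_zero (by positivity))
  let e := PiLp.complexLinearIsometryEquivEuclidean d
  exact ⟨e ∘ f, e.injective.comp hf_inj, fun u v h => (e.dist_map _ _).trans (hf_dist u v h)⟩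

/-- any finite graph with chromatic number at most `d` (`d ≥ 1`) can be
realized as a unit distance graph in `ℝ^{2d}`. -/
theorem stmt_0 (d : ℕ) (hd : 1 ≤ d) (V : Type) [Fintype V] (G : SimpleGraph V)
    (hχ : G.chromaticNumber ≤ (d : ℕ∞)) :
    ∃ f : V → EuclideanSpace ℝ (Fin (2 * d)), Function.Injective f ∧
      ∀ u v : V, G.Adj u v → dist (f u) (f v) = 1 :=
  stmt_0_general d V G hχ
end

section
/- For every d ≥ 4, the graph K' obtained from the complete bipartite graph K_{d,d} by deleting a perfect matching on d-3 specified pairs (i.e., with parts A = {a_1,...,a_d}, B = {b_1,...,b_d} and edge set all pairs (a_i,b_j) except (a_4,b_4),...,(a_d,b_d)) cannot be realized as a faithful unit distance graph in R^d. -/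
open RealInnerProductSpace Finset

section Aux
variable {E : Type} [NormedAddCommGroup E] [InnerProductSpace ℝ E]

lemma easy_pair {α β : ℝ} {p q : E} (hpq : p ≠ q) (h1 : α + β = 0)
    (h2 : α • p + β • q = 0) : α = 0 := by
  have hβ : β = -α := by linarith
  rw [hβ, neg_smul, ← sub_eq_add_neg, ← smul_sub] at h2
  rcases smul_eq_zero.mp h2 with h | h
  · exact h
  · exact absurd (sub_eq_zero.mp h) hpq

lemma eq_of_inner_one {x y : E} (hx : ⟪x,x⟫ = 1) (hy : ⟪y,y⟫ = 1) (hxy : ⟪x,y⟫ = 1) :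
    x = y := by
  have h : ⟪x - y, x - y⟫ = (0:ℝ) := by
    rw [inner_sub_left, inner_sub_right, inner_sub_right]
    linarith [real_inner_comm x y]
  exact sub_eq_zero.mp (inner_self_eq_zero.mp h)

lemma lift_lemma {p q r : E} (hpq : p ≠ q) (hpr : p ≠ r) (hqr : q ≠ r)
    {α β γ : ℝ} (h1 : α + β + γ = 0)
    (h2 : α • p + β • q + γ • r = 0)
    (h3 : α * ⟪p,p⟫ + β * ⟪q,q⟫ + γ * ⟪r,r⟫ = 0) :
    α = 0 ∧ β = 0 ∧ γ = 0 := by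
  have hγ : γ = -(α + β) := by linarith
  subst hγ
  have hY : (0:ℝ) < ⟪p - q, p - q⟫ := by
    rw [real_inner_self_eq_norm_sq]
    exact pow_pos (norm_pos_iff.mpr (sub_ne_zero.mpr hpq)) 2
  have hαβ : α * β = 0 := by
    have h4 : (-(α+β)) • (r - p) = β • (p - q) := by
      linear_combination (norm := module) h2
    have n1 : (α+β)^2 * ⟪r - p, r - p⟫ = β^2 * ⟪p - q, p - q⟫ := by
      have := congrArg (fun z => ⟪z, z⟫) h4
      simp only [real_inner_smul_left, real_inner_smul_right] at this
      nlinarith [this]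
    have hip : α * ⟪p,p⟫ + β * ⟪q,p⟫ - (α+β) * ⟪r,p⟫ = 0 := by
      have := congrArg (fun z => ⟪z, p⟫) h2
      simp only [inner_add_left, real_inner_smul_left, inner_zero_left, neg_smul,
        inner_neg_left] at this
      linarith [this]
    have h5 : β * ⟪p - q, p - q⟫ - (α+β) * ⟪r - p, r - p⟫ = 0 := by
      simp only [inner_sub_left, inner_sub_right]
      linear_combination h3 - 2 * hip + β*real_inner_comm p q - (α+β)*real_inner_comm p r
    have key : α * β * ⟪p - q, p - q⟫ = 0 := by
      linear_combination (α+β) * h5 + n1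
    exact (mul_eq_zero.mp key).resolve_right (ne_of_gt hY)
  rcases mul_eq_zero.mp hαβ with h | h
  · subst h
    have h2' : β • q + (-β) • r = 0 := by
      linear_combination (norm := module) h2
    have hb : β = 0 := easy_pair hqr (by ring) h2'
    refine ⟨rfl, hb, by simp [hb]⟩
  · subst h
    have h2' : α • p + (-α) • r = 0 := by
      linear_combination (norm := module) h2
    have ha : α = 0 := easy_pair hpr (by ring) h2'
    exact ⟨ha, rfl, by simp [ha]⟩

end Aux

/-- `K_{d,d}` minus a matching on the last `d - 3` pairs: parts `A = Fin d` (left) and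
`B = Fin d` (right); `a_i` is adjacent to `b_j` unless `i = j` and `i ≥ 4`
(with `1`-based indexing, i.e. `3 ≤ i` with `0`-based indexing). -/
def Kprime (d : ℕ) : SimpleGraph (Fin d ⊕ Fin d) :=
  SimpleGraph.fromRel (fun u v =>
    match u, v with
    | Sum.inl i, Sum.inr j => ¬ (i = j ∧ 3 ≤ i.val)
    | _, _ => False)

/-- for `d ≥ 4`, the graph `K_{d,d}` minus a matching of size `d - 3`
is not realizable as a faithful unit distance graph in `ℝ^d`. -/
theorem stmt_2 (d : ℕ) (hd : 4 ≤ d) :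
    ¬ ∃ f : (Fin d ⊕ Fin d) → EuclideanSpace ℝ (Fin d), Function.Injective f ∧
      ∀ u v, u ≠ v → ((Kprime d).Adj u v ↔ dist (f u) (f v) = 1) := by
  rintro ⟨f, hinj, hiff⟩
  set a : Fin d → EuclideanSpace ℝ (Fin d) := fun i => f (Sum.inl i) with ha
  set b : Fin d → EuclideanSpace ℝ (Fin d) := fun j => f (Sum.inr j) with hb
  -- index 0,1,2
  set i0 : Fin d := ⟨0, by omega⟩ with hi0
  set i1 : Fin d := ⟨1, by omega⟩ with hi1
  set i2 : Fin d := ⟨2, by omega⟩ with hi2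
  have hv0 : i0.val = 0 := by rw [hi0]
  have hv1 : i1.val = 1 := by rw [hi1]
  have hv2 : i2.val = 2 := by rw [hi2]
  -- distances on edges
  have hab : ∀ i j : Fin d, ¬(i = j ∧ 3 ≤ i.val) → ⟪a i - b j, a i - b j⟫ = 1 := by
    intro i j h
    have hadj : (Kprime d).Adj (Sum.inl i) (Sum.inr j) := by
      simp only [Kprime, SimpleGraph.fromRel_adj, ne_eq]
      exact ⟨by simp, Or.inl h⟩
    have hd1 : dist (a i) (b j) = 1 := (hiff _ _ (by simp)).mp hadj
    have hn : ‖a i - b j‖ = 1 := by rwa [dist_eq_norm] at hd1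
    rw [real_inner_self_eq_norm_sq, hn]; norm_num
  -- non-edges in the matching
  have hnab : ∀ i : Fin d, 3 ≤ i.val → ⟪a i - b i, a i - b i⟫ ≠ 1 := by
    intro i hi hcon
    have hdist : dist (a i) (b i) = 1 := by
      rw [dist_eq_norm]
      have hnn := norm_nonneg (a i - b i)
      rw [real_inner_self_eq_norm_sq] at hcon
      have hfac : (‖a i - b i‖ - 1) * (‖a i - b i‖ + 1) = 0 := by nlinarith
      rcases mul_eq_zero.mp hfac with h | h
      · linarith
      · linarith
    have hadj := (hiff (Sum.inl i) (Sum.inr i) (by simp)).mpr hdist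
    rw [Kprime, SimpleGraph.fromRel_adj] at hadj
    rcases hadj.2 with h | h
    · exact h ⟨rfl, hi⟩
    · exact h
  -- injectivity
  have hbne : ∀ j j' : Fin d, j ≠ j' → b j ≠ b j' :=
    fun j j' h hc => h (Sum.inr.inj (hinj hc))
  have hane : ∀ i i' : Fin d, i ≠ i' → a i ≠ a i' :=
    fun i i' h hc => h (Sum.inl.inj (hinj hc))
  -- orthogonality of A-differences and B-differences (for small indices)
  have ortho : ∀ i i' j j' : Fin d, i.val < 3 → i'.val < 3 →
      ⟪a i - a i', b j - b j'⟫ = 0 := by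
    intro i i' j j' hi hi'
    have e1 := hab i j (by omega)
    have e2 := hab i j' (by omega)
    have e3 := hab i' j (by omega)
    have e4 := hab i' j' (by omega)
    simp only [inner_sub_left, inner_sub_right] at e1 e2 e3 e4 ⊢
    linarith [e1, e2, e3, e4, real_inner_comm (a i) (b j), real_inner_comm (a i) (b j'),
      real_inner_comm (a i') (b j), real_inner_comm (a i') (b j')]
  -- a i0, a i1, a i2 affinely independent
  have hli : LinearIndependent ℝ ![a i1 - a i0, a i2 - a i0] := by
    rw [LinearIndependent.pair_iff]
    intro s t hst
    have hne10 : i1 ≠ i0 := by rw [Fin.ne_iff_vne, hv1, hv0]; omega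
    have hne20 : i2 ≠ i0 := by rw [Fin.ne_iff_vne, hv2, hv0]; omega
    have hne12 : i1 ≠ i2 := by rw [Fin.ne_iff_vne, hv1, hv2]; omega
    rcases eq_or_ne s 0 with hs | hs
    · subst hs
      refine ⟨rfl, ?_⟩
      rw [zero_smul, zero_add] at hst
      rcases smul_eq_zero.mp hst with h | h
      · exact h
      · exact absurd (sub_eq_zero.mp h) (hane i2 i0 hne20)
    rcases eq_or_ne t 0 with ht | ht
    · subst ht
      refine ⟨?_, rfl⟩
      rw [zero_smul, add_zero] at hst
      rcases smul_eq_zero.mp hst with h | h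
      · exact h
      · exact absurd (sub_eq_zero.mp h) (hane i1 i0 hne10)
    · exfalso
      have h0 := hab i0 i0 (by rw [hv0]; omega)
      have h1 := hab i1 i0 (fun hc => by rw [hv1] at hc; omega)
      have h2 := hab i2 i0 (fun hc => by rw [hv2] at hc; omega)
      have hrel : s • (a i1 - b i0) + t • (a i2 - b i0) = (s + t) • (a i0 - b i0) := by
        linear_combination (norm := module) hst
      have hinn := congrArg (fun z => ⟪z, z⟫) hrel
      simp only [inner_add_left, inner_add_right, real_inner_smul_left,
        real_inner_smul_right] at hinn
      rw [h0, h1, h2] at hinn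
      have hcomm := real_inner_comm (a i1 - b i0) (a i2 - b i0)
      have hip : ⟪a i1 - b i0, a i2 - b i0⟫ = 1 := by
        have hst' : s * t ≠ 0 := mul_ne_zero hs ht
        have : s * t * (⟪a i1 - b i0, a i2 - b i0⟫ - 1) = 0 := by
          linear_combination hinn / 2 - (s*t/2) * hcomm
        rcases mul_eq_zero.mp this with h | h
        · exact absurd h hst'
        · linarith
      have heq : a i1 - b i0 = a i2 - b i0 := eq_of_inner_one h1 h2 hip
      have : a i1 = a i2 := by
        have := congrArg (fun z => z + b i0) heq
        simpa using this
      exact hane i1 i2 hne12 this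
  -- span and orthogonal complement
  set S : Submodule ℝ (EuclideanSpace ℝ (Fin d)) :=
    Submodule.span ℝ (Set.range ![a i1 - a i0, a i2 - a i0]) with hS
  have hfrS : Module.finrank ℝ S = 2 := by
    rw [finrank_span_eq_card hli, Fintype.card_fin]
  have hfrO : Module.finrank ℝ (Sᗮ) = d - 2 := by
    have h := Submodule.finrank_add_finrank_orthogonal (K := S)
    rw [hfrS, finrank_euclideanSpace, Fintype.card_fin] at h
    omega
  have hrange : Set.range ![a i1 - a i0, a i2 - a i0] = {a i1 - a i0, a i2 - a i0} := by
    simp only [Matrix.range_cons, Matrix.range_empty, Set.union_empty, Set.union_singleton]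
    exact Set.pair_comm _ _
  have hmem : ∀ j : Fin d, (b j - b i0) ∈ Sᗮ := by
    intro j
    rw [Submodule.mem_orthogonal]
    intro u hu
    rw [hS, hrange, Submodule.mem_span_pair] at hu
    obtain ⟨m, n, rfl⟩ := hu
    rw [inner_add_left, real_inner_smul_left, real_inner_smul_left,
      ortho i1 i0 j i0 (by omega) (by omega), ortho i2 i0 j i0 (by omega) (by omega)]
    ring
  -- too many vectors in the orthogonal complement
  set g : {j : Fin d // j ≠ i0} → Sᗮ := fun k => ⟨b k.val - b i0, hmem _⟩ with hg
  have hnli : ¬ LinearIndependent ℝ g := by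
    intro h
    have hcard := h.fintype_card_le_finrank
    rw [hfrO] at hcard
    rw [Fintype.card_subtype_compl, Fintype.card_subtype_eq, Fintype.card_fin] at hcard
    omega
  obtain ⟨μ, hμsum, k0, hk0⟩ := Fintype.not_linearIndependent_iff.mp hnli
  have hμE : ∑ k : {j : Fin d // j ≠ i0}, μ k • (b k.val - b i0) = 0 := by
    have := congrArg (Subtype.val) hμsum
    rw [Submodule.coe_sum] at this
    simpa [hg] using this
  -- the coefficients
  set lam : Fin d → ℝ :=
    fun j => if h : j = i0 then -(∑ k : {j : Fin d // j ≠ i0}, μ k) else μ ⟨j, h⟩ with hlam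
  have hlam0 : lam i0 = -(∑ k : {j : Fin d // j ≠ i0}, μ k) := by rw [hlam]; simp
  have hlamne : ∀ k : {j : Fin d // j ≠ i0}, lam k.val = μ k := by
    intro k
    rw [hlam]
    simp only [dif_neg k.prop]
  -- sum splitting
  have hsum_split : ∀ (F : Fin d → EuclideanSpace ℝ (Fin d)),
      ∑ j, F j = F i0 + ∑ k : {j : Fin d // j ≠ i0}, F k.val := by
    intro F
    rw [← Finset.sum_subtype (Finset.univ.erase i0) (fun x => by simp) F]
    exact (Finset.add_sum_erase _ F (mem_univ i0)).symm
  have hsum_splitR : ∀ (F : Fin d → ℝ),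
      ∑ j, F j = F i0 + ∑ k : {j : Fin d // j ≠ i0}, F k.val := by
    intro F
    rw [← Finset.sum_subtype (Finset.univ.erase i0) (fun x => by simp) F]
    exact (Finset.add_sum_erase _ F (mem_univ i0)).symm
  have S1 : ∑ j, lam j = 0 := by
    rw [hsum_splitR lam, hlam0]
    simp only [hlamne]
    ring
  have S2 : ∑ j, lam j • b j = 0 := by
    have h2 : ∑ k : {j : Fin d // j ≠ i0}, μ k • b k.val
        = (∑ k : {j : Fin d // j ≠ i0}, μ k) • b i0 := by
      have hE := hμE
      simp only [smul_sub] at hE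
      rw [Finset.sum_sub_distrib, sub_eq_zero] at hE
      rw [hE, ← Finset.sum_smul]
    calc ∑ j, lam j • b j
        = lam i0 • b i0 + ∑ k : {j : Fin d // j ≠ i0}, lam k.val • b k.val :=
          hsum_split (fun j => lam j • b j)
      _ = 0 := by
          rw [hlam0]
          simp only [hlamne]
          rw [h2, neg_smul]
          abel
  have hinner0 : ∀ x : EuclideanSpace ℝ (Fin d), ∑ j, lam j * ⟪x, b j⟫ = 0 := by
    intro x
    have h : ⟪x, ∑ j, lam j • b j⟫ = (0:ℝ) := by rw [S2, inner_zero_right]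
    rw [inner_sum] at h
    simp only [real_inner_smul_right] at h
    exact h
  have hbb : ∀ j, ⟪b j, b j⟫ = 1 - ⟪a i0, a i0⟫ + 2 * ⟪a i0, b j⟫ := by
    intro j
    have h := hab i0 j (by rw [hv0]; omega)
    simp only [inner_sub_left, inner_sub_right] at h
    linarith [real_inner_comm (a i0) (b j)]
  have S3 : ∑ j, lam j * ⟪b j, b j⟫ = 0 := by
    have hterm : ∀ j, lam j * ⟪b j, b j⟫
        = (1 - ⟪a i0, a i0⟫) * lam j + 2 * (lam j * ⟪a i0, b j⟫) := by
      intro j; rw [hbb j]; ring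
    rw [Finset.sum_congr rfl (fun j _ => hterm j), Finset.sum_add_distrib,
      ← Finset.mul_sum, ← Finset.mul_sum, S1, hinner0]
    ring
  -- key identity
  have hkey : ∀ i, ∑ j, lam j * (⟪a i - b j, a i - b j⟫ - 1) = 0 := by
    intro i
    have hterm : ∀ j, lam j * (⟪a i - b j, a i - b j⟫ - 1)
        = (⟪a i, a i⟫ - 1) * lam j - 2 * (lam j * ⟪a i, b j⟫) + lam j * ⟪b j, b j⟫ := by
      intro j
      simp only [inner_sub_left, inner_sub_right]
      linear_combination lam j * real_inner_comm (b j) (a i)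
    rw [Finset.sum_congr rfl (fun j _ => hterm j), Finset.sum_add_distrib,
      Finset.sum_sub_distrib, ← Finset.mul_sum, ← Finset.mul_sum, S1, hinner0, S3]
    ring
  -- coefficients vanish outside {0,1,2}
  have hzero : ∀ i : Fin d, 3 ≤ i.val → lam i = 0 := by
    intro i hi
    have h := hkey i
    rw [Finset.sum_eq_single i (fun j _ hji => ?_) (fun hni => absurd (mem_univ i) hni)] at h
    · rcases mul_eq_zero.mp h with h' | h'
      · exact h'
      · exact absurd (by linarith : ⟪a i - b i, a i - b i⟫ = 1) (hnab i hi)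
    · rw [hab i j (fun hc => hji hc.1.symm), sub_self, mul_zero]
  -- collapse sums to {i0, i1, i2}
  have hne01 : i0 ≠ i1 := by rw [Fin.ne_iff_vne, hv0, hv1]; omega
  have hne02 : i0 ≠ i2 := by rw [Fin.ne_iff_vne, hv0, hv2]; omega
  have hne12 : i1 ≠ i2 := by rw [Fin.ne_iff_vne, hv1, hv2]; omega
  have hmem3 : ∀ x : Fin d, x ∉ ({i0, i1, i2} : Finset (Fin d)) → 3 ≤ x.val := by
    intro x hx
    simp only [Finset.mem_insert, Finset.mem_singleton] at hx
    push_neg at hx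
    obtain ⟨h0, h1, h2⟩ := hx
    rw [Fin.ne_iff_vne, hv0] at h0
    rw [Fin.ne_iff_vne, hv1] at h1
    rw [Fin.ne_iff_vne, hv2] at h2
    omega
  have hnotmem1 : i0 ∉ ({i1, i2} : Finset (Fin d)) := by
    simp only [Finset.mem_insert, Finset.mem_singleton]
    push_neg
    exact ⟨hne01, hne02⟩
  have hnotmem2 : i1 ∉ ({i2} : Finset (Fin d)) := by
    simpa using hne12
  have collapseE : ∀ (F : Fin d → EuclideanSpace ℝ (Fin d)), (∀ j, 3 ≤ j.val → F j = 0) →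
      ∑ j, F j = F i0 + F i1 + F i2 := by
    intro F hF
    rw [← Finset.sum_subset (Finset.subset_univ ({i0, i1, i2} : Finset (Fin d)))
      (fun x _ hx => hF x (hmem3 x hx))]
    rw [Finset.sum_insert hnotmem1, Finset.sum_insert hnotmem2, Finset.sum_singleton]
    abel
  have collapseR : ∀ (F : Fin d → ℝ), (∀ j, 3 ≤ j.val → F j = 0) →
      ∑ j, F j = F i0 + F i1 + F i2 := by
    intro F hF
    rw [← Finset.sum_subset (Finset.subset_univ ({i0, i1, i2} : Finset (Fin d)))
      (fun x _ hx => hF x (hmem3 x hx))]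
    rw [Finset.sum_insert hnotmem1, Finset.sum_insert hnotmem2, Finset.sum_singleton]
    ring
  have T1 : lam i0 + lam i1 + lam i2 = 0 :=
    (collapseR lam hzero).symm.trans S1
  have T2 : lam i0 • b i0 + lam i1 • b i1 + lam i2 • b i2 = 0 :=
    (collapseE (fun j => lam j • b j) (fun j hj => by show lam j • b j = 0; rw [hzero j hj, zero_smul])).symm.trans S2
  have T3 : lam i0 * ⟪b i0, b i0⟫ + lam i1 * ⟪b i1, b i1⟫ + lam i2 * ⟪b i2, b i2⟫ = 0 :=
    (collapseR (fun j => lam j * ⟪b j, b j⟫)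
      (fun j hj => by show lam j * ⟪b j, b j⟫ = 0; rw [hzero j hj, zero_mul])).symm.trans S3
  obtain ⟨z0, z1, z2⟩ := lift_lemma (hbne i0 i1 hne01) (hbne i0 i2 hne02)
    (hbne i1 i2 hne12) T1 T2 T3
  -- contradiction with nontriviality
  apply hk0
  rw [← hlamne k0]
  rcases lt_or_ge (k0 : Fin d).val 3 with h3 | h3
  · have hval := k0.prop
    rw [Fin.ne_iff_vne, hv0] at hval
    rcases Nat.lt_or_ge (k0 : Fin d).val 2 with h2' | h2'
    · have : (k0 : Fin d) = i1 := by rw [Fin.ext_iff, hv1]; omega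
      rw [this]; exact z1
    · have : (k0 : Fin d) = i2 := by rw [Fin.ext_iff, hv2]; omega
      rw [this]; exact z2
  · exact hzero _ h3
end

section
/- The complete bipartite graph K_{3,3} cannot be realized as a faithful unit distance graph in R^3. -/
open RealInnerProductSpace Module

lemma key {F : Type*} [NormedAddCommGroup F] [InnerProductSpace ℝ F]
    {x p q : F} (h : dist x p = dist x q) :
    2 * ⟪x - p, q - p⟫ = ‖q - p‖ ^ 2 := by
  have hx : x - q = (x - p) - (q - p) := by abel
  have h2 : ‖x - p‖ ^ 2 = ‖x - q‖ ^ 2 := by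
    rw [← dist_eq_norm, ← dist_eq_norm, h]
  have h3 : ‖x - q‖ ^ 2 = ‖x - p‖ ^ 2 - 2 * ⟪x - p, q - p⟫ + ‖q - p‖ ^ 2 := by
    rw [hx]; exact norm_sub_sq_real _ _
  linarith

lemma lemA {F : Type*} [NormedAddCommGroup F] [InnerProductSpace ℝ F]
    {x p q r : F} {t : ℝ} (h1 : dist x p = dist x q) (h2 : dist x p = dist x r)
    (hpq : p ≠ q) (ht : r - p = t • (q - p)) : r = p ∨ r = q := by
  have e1 := key h1
  have e2 := key h2
  rw [ht, real_inner_smul_right, norm_smul, mul_pow] at e2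
  have hq : ‖q - p‖ ^ 2 ≠ 0 :=
    pow_ne_zero _ (norm_ne_zero_iff.mpr (sub_ne_zero.mpr (Ne.symm hpq)))
  have htt : t = t ^ 2 := by
    rw [Real.norm_eq_abs, sq_abs] at e2
    have h3 : t * ‖q - p‖ ^ 2 = t ^ 2 * ‖q - p‖ ^ 2 := by
      linear_combination e2 - t * e1
    exact mul_right_cancel₀ hq h3
  have : t = 0 ∨ t = 1 := by
    rcases mul_eq_zero.mp (show t * (t - 1) = 0 by nlinarith) with h | h
    · exact Or.inl h
    · exact Or.inr (by linarith)
  rcases this with h | h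
  · left; rw [h, zero_smul, sub_eq_zero] at ht; exact ht
  · right; rw [h, one_smul, sub_left_injective.eq_iff] at ht; exact ht

/-- `K_{3,3}` cannot be realized as a faithful unit distance graph in `ℝ^3`. -/
theorem stmt_4 :
    ¬ ∃ f : (Fin 3 ⊕ Fin 3) → EuclideanSpace ℝ (Fin 3), Function.Injective f ∧
      ∀ u v, u ≠ v →
        ((completeBipartiteGraph (Fin 3) (Fin 3)).Adj u v ↔ dist (f u) (f v) = 1) := by
  rintro ⟨f, hinj, hf⟩
  set a : Fin 3 → EuclideanSpace ℝ (Fin 3) := fun i => f (.inl i) with ha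
  set b : Fin 3 → EuclideanSpace ℝ (Fin 3) := fun j => f (.inr j) with hb
  have hab : ∀ i j, dist (a i) (b j) = 1 := by
    intro i j
    exact (hf _ _ (by simp)).mp (by simp)
  have haa : ∀ i j, i ≠ j → a i ≠ a j := by
    intro i j hij h
    exact hij (by simpa using hinj h)
  have hbb : ∀ i j, i ≠ j → b i ≠ b j := by
    intro i j hij h
    exact hij (by simpa using hinj h)
  -- distances from b j to all a i equal
  have hba : ∀ j i i', dist (b j) (a i) = dist (b j) (a i') := by
    intro j i i'
    rw [dist_comm, hab, dist_comm, hab]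
  have hab' : ∀ i j j', dist (a i) (b j) = dist (a i) (b j') := by
    intro i j j'; rw [hab, hab]
  -- orthogonality
  have horth : ∀ j i, ⟪b j - b 0, a i - a 0⟫ = 0 := by
    intro j i
    have h1 := key (hba j (0) i)
    have h2 := key (hba 0 (0) i)
    have : b j - b 0 = (b j - a 0) - (b 0 - a 0) := by abel
    rw [this, inner_sub_left]
    linarith
  -- b1 - b0 and b2 - b0 linearly independent
  have hv1 : b 1 - b 0 ≠ 0 := fun h => hbb 1 0 (by decide) (sub_eq_zero.mp h)
  have hv : LinearIndependent ℝ ![b 1 - b 0, b 2 - b 0] := by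
    rw [LinearIndependent.pair_iff' hv1]
    intro c hc
    rcases lemA (hab' 0 0 1) (hab' 0 0 2) (hbb 0 1 (by decide)) hc.symm with h | h
    · exact hbb 2 0 (by decide) h
    · exact hbb 2 1 (by decide) h
  -- the span and its orthogonal complement
  set K : Submodule ℝ (EuclideanSpace ℝ (Fin 3)) :=
    Submodule.span ℝ (Set.range ![b 1 - b 0, b 2 - b 0]) with hK
  have hKrank : finrank ℝ K = 2 := by
    rw [hK, finrank_span_eq_card hv]; simp
  have hKorank : finrank ℝ Kᗮ = 1 := by
    have := K.finrank_add_finrank_orthogonal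
    rw [hKrank, finrank_euclideanSpace_fin] at this
    omega
  have hmem : ∀ i, a i - a 0 ∈ Kᗮ := by
    intro i
    rw [Submodule.mem_orthogonal]
    intro v hv'
    rw [hK, Submodule.mem_span_range_iff_exists_fun] at hv'
    obtain ⟨c, hc⟩ := hv'
    rw [← hc, Fin.sum_univ_two]
    simp only [Matrix.cons_val_zero, Matrix.cons_val_one, Matrix.head_cons]
    rw [inner_add_left, real_inner_smul_left, real_inner_smul_left, horth, horth]
    ring
  -- a2 - a0 ≠ 0
  have hw : a 2 - a 0 ≠ 0 := fun h => haa 2 0 (by decide) (sub_eq_zero.mp h)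
  -- u, w can't be independent in Kᗮ
  have hdep : ¬ LinearIndependent ℝ ![a 2 - a 0, a 1 - a 0] := by
    intro hind
    have hle : Submodule.span ℝ (Set.range ![a 2 - a 0, a 1 - a 0]) ≤ Kᗮ := by
      rw [Submodule.span_le]
      rintro v ⟨i, rfl⟩
      fin_cases i <;> simpa using hmem _
    have h2 : finrank ℝ (Submodule.span ℝ (Set.range ![a 2 - a 0, a 1 - a 0])) = 2 := by
      rw [finrank_span_eq_card hind]; simp
    have := Submodule.finrank_mono hle
    rw [h2, hKorank] at this
    omega
  rw [LinearIndependent.pair_iff' hw] at hdep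
  push_neg at hdep
  obtain ⟨c, hc⟩ := hdep
  rcases lemA (hba 0 0 2) (hba 0 0 1) (haa 0 2 (by decide)) hc.symm with h | h
  · exact haa 1 0 (by decide) h
  · exact haa 1 2 (by decide) h
end

section
/- Let P_1,...,P_m be m real polynomials in ℓ real variables with m ≥ ℓ, each of degree at most k. Then the number of distinct zero patterns z(P_1,...,P_m) satisfies z(P_1,...,P_m) ≤ C(km - (k-2)ℓ, ℓ). -/
open Finset MvPolynomial

private lemma slack_card (ℓ A : ℕ) :
    Nat.card {f : Fin ℓ → ℕ // ∑ i, f i ≤ A} = (A + ℓ).choose ℓ := by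
  classical
  have e1 : {f : Fin ℓ → ℕ // ∑ i, f i ≤ A} ≃ {g : Fin (ℓ+1) → ℕ // ∑ i, g i = A} :=
    { toFun := fun f => ⟨Fin.cons (A - ∑ i, f.1 i) f.1, by
        rw [Fin.sum_cons]; have := f.2; omega⟩
      invFun := fun g => ⟨Fin.tail g.1, by
        have h := g.2
        rw [Fin.sum_univ_succ] at h
        have : ∑ i : Fin ℓ, Fin.tail g.1 i = ∑ i : Fin ℓ, g.1 i.succ := rfl
        omega⟩
      left_inv := fun f => by
        apply Subtype.ext
        simp only [Fin.tail_cons]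
      right_inv := fun g => by
        apply Subtype.ext
        have h := g.2
        rw [Fin.sum_univ_succ] at h
        have h2 : ∑ i : Fin ℓ, Fin.tail g.1 i = ∑ i : Fin ℓ, g.1 i.succ := rfl
        have h3 : A - ∑ i : Fin ℓ, Fin.tail g.1 i = g.1 0 := by omega
        show Fin.cons (A - ∑ i : Fin ℓ, Fin.tail g.1 i) (Fin.tail g.1) = g.1
        rw [h3, Fin.cons_self_tail] }
  rw [Nat.card_congr (e1.trans (Sym.equivNatSumOfFintype (Fin (ℓ+1)) A).symm)]
  rw [Nat.card_eq_fintype_card, Sym.card_sym_eq_choose]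
  rw [Fintype.card_fin]
  have h4 : ℓ + 1 + A - 1 = A + ℓ := by omega
  rw [h4]
  have h5 := Nat.choose_symm (Nat.le_add_left ℓ A)
  rwa [Nat.add_sub_cancel] at h5

private lemma card_degreeLE (ℓ A : ℕ) :
    Nat.card {d : Fin ℓ →₀ ℕ // (d.sum fun _ e => e) ≤ A} = (A + ℓ).choose ℓ := by
  rw [← slack_card ℓ A]
  refine Nat.card_congr (Equiv.subtypeEquiv Finsupp.equivFunOnFinite ?_)
  intro d
  rw [Finsupp.sum_fintype _ _ (fun _ => rfl)]
  exact Iff.rfl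

private lemma final_ineq (ℓ A m : ℕ) (hmA : m ≤ A + ℓ) :
    (∑ i ∈ Finset.range ℓ, m.choose i) + (A + ℓ).choose ℓ ≤ (A + 2 * ℓ).choose ℓ := by
  have h1 : (A + 2 * ℓ).choose ℓ
      = ∑ i ∈ Finset.range (ℓ+1), (A + ℓ).choose i * ℓ.choose (ℓ - i) := by
    rw [show A + 2 * ℓ = (A + ℓ) + ℓ by ring, Nat.add_choose_eq,
      Finset.Nat.sum_antidiagonal_eq_sum_range_succ_mk]
  rw [h1, Finset.sum_range_succ, Nat.sub_self, Nat.choose_zero_right, mul_one]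
  refine Nat.add_le_add ?_ le_rfl
  refine Finset.sum_le_sum fun i _ => ?_
  calc m.choose i ≤ (A + ℓ).choose i := Nat.choose_le_choose i hmA
    _ ≤ (A + ℓ).choose i * ℓ.choose (ℓ - i) :=
        Nat.le_mul_of_pos_right _ (Nat.choose_pos (by omega))

set_option maxHeartbeats 1000000 in
set_option synthInstance.maxHeartbeats 200000 in
private lemma many_bound {m ℓ A : ℕ} (P : Fin m → MvPolynomial (Fin ℓ) ℝ)
    (S : Set (Fin m → Prop))
    (hS : ∀ ε ∈ S, ∃ x : Fin ℓ → ℝ, ∀ j, ε j ↔ MvPolynomial.eval x (P j) = 0)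
    (hdegS : ∀ (ε : S) (t : Finset (Fin m)), (∀ j ∈ t, ¬ ε.1 j) →
      (∏ j ∈ t, P j).totalDegree ≤ A) :
    Nat.card S ≤ (A + ℓ).choose ℓ := by
  classical
  letI : Fintype ↥S := Fintype.ofFinite _
  choose w hw using fun ε : S => hS ε.1 ε.2
  set supp : S → Finset (Fin m) := fun ε => Finset.univ.filter (fun j => ¬ ε.1 j) with hsupp
  have hmem_supp : ∀ (ε : S) (j), j ∈ supp ε ↔ ¬ ε.1 j := fun ε j => by
    rw [hsupp]; simp
  set Q : S → MvPolynomial (Fin ℓ) ℝ := fun ε => ∏ j ∈ supp ε, P j with hQdef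
  have hevalQ : ∀ ε δ : S, MvPolynomial.eval (w ε) (Q δ)
      = ∏ j ∈ supp δ, MvPolynomial.eval (w ε) (P j) := by
    intro ε δ; rw [hQdef]; exact map_prod _ _ _
  have hwQ : ∀ ε : S, MvPolynomial.eval (w ε) (Q ε) ≠ 0 := by
    intro ε
    rw [hevalQ]
    rw [Finset.prod_ne_zero_iff]
    intro j hj
    have hj' : ¬ ε.1 j := (hmem_supp ε j).mp hj
    exact fun h0 => hj' ((hw ε j).mpr h0)
  have hQz : ∀ ε δ : S, MvPolynomial.eval (w ε) (Q δ) ≠ 0 → supp δ ⊆ supp ε := by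
    intro ε δ hne j hj
    by_contra hjε
    apply hne
    rw [hevalQ]
    refine Finset.prod_eq_zero hj ?_
    have hεj : ε.1 j := by
      by_contra h
      exact hjε ((hmem_supp ε j).mpr h)
    exact (hw ε j).mp hεj
  have hsupp_inj : Function.Injective supp := by
    intro δ ε h
    apply Subtype.ext
    funext j
    apply propext
    have h2 : ¬ δ.1 j ↔ ¬ ε.1 j := by
      rw [← hmem_supp δ j, ← hmem_supp ε j, h]
    exact not_iff_not.mp h2
  have hind : LinearIndependent ℝ Q := by
    rw [linearIndependent_iff']
    intro s g hsum i hi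
    by_contra hgi
    have hne : (s.filter (fun i => g i ≠ 0)).Nonempty :=
      ⟨i, Finset.mem_filter.mpr ⟨hi, hgi⟩⟩
    obtain ⟨i₀, hi₀, hmin⟩ := Finset.exists_min_image _ (fun i => (supp i).card) hne
    obtain ⟨hi₀s, hgi₀⟩ := Finset.mem_filter.mp hi₀
    have h0 : ∑ j ∈ s, g j * MvPolynomial.eval (w i₀) (Q j) = 0 := by
      have h := congrArg (MvPolynomial.eval (w i₀)) hsum
      rw [map_sum, map_zero] at h
      simpa only [MvPolynomial.smul_eval] using h
    have h1 : ∀ j ∈ s, j ≠ i₀ → g j * MvPolynomial.eval (w i₀) (Q j) = 0 := by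
      intro j hj hjne
      by_cases hgj : g j = 0
      · rw [hgj, zero_mul]
      by_cases hQj : MvPolynomial.eval (w i₀) (Q j) = 0
      · rw [hQj, mul_zero]
      exfalso
      have hsub := hQz i₀ j hQj
      have hle := hmin j (Finset.mem_filter.mpr ⟨hj, hgj⟩)
      have heq : supp j = supp i₀ := Finset.eq_of_subset_of_card_le hsub hle
      exact hjne (hsupp_inj heq)
    rw [Finset.sum_eq_single_of_mem i₀ hi₀s h1] at h0
    exact hgi₀ ((mul_eq_zero.mp h0).resolve_right (hwQ i₀))
  have hdegQ : ∀ ε : S, (Q ε).totalDegree ≤ A := by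
    intro ε
    refine hdegS ε (supp ε) ?_
    intro j hj
    exact (hmem_supp ε j).mp hj
  have hmem : ∀ ε : S, Q ε ∈ MvPolynomial.restrictTotalDegree (Fin ℓ) ℝ A := fun ε =>
    (MvPolynomial.mem_restrictTotalDegree _ _ _).mpr (hdegQ ε)
  set Q' : S → MvPolynomial.restrictTotalDegree (Fin ℓ) ℝ A := fun ε => ⟨Q ε, hmem ε⟩
    with hQ'def
  have hind' : LinearIndependent ℝ Q' := by
    apply LinearIndependent.of_comp ((MvPolynomial.restrictTotalDegree (Fin ℓ) ℝ A).subtype)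
    exact hind
  letI : Module.Finite ℝ (MvPolynomial.restrictTotalDegree (Fin ℓ) ℝ A) := inferInstance
  have hcard := hind'.fintype_card_le_finrank
  letI : FiniteDimensional ℝ
      (MvPolynomial.restrictSupport ℝ {n : Fin ℓ →₀ ℕ | (n.sum fun _ e => e) ≤ A}) := ‹_›
  letI : Fintype {n : Fin ℓ →₀ ℕ | (n.sum fun _ e => e) ≤ A} :=
    FiniteDimensional.fintypeBasisIndex
      (MvPolynomial.basisRestrictSupport ℝ {n : Fin ℓ →₀ ℕ | (n.sum fun _ e => e) ≤ A})
  have hrank : Module.finrank ℝ (MvPolynomial.restrictTotalDegree (Fin ℓ) ℝ A)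
      = Fintype.card {n : Fin ℓ →₀ ℕ | (n.sum fun _ e => e) ≤ A} :=
    Module.finrank_eq_card_basis
      (MvPolynomial.basisRestrictSupport ℝ {n : Fin ℓ →₀ ℕ | (n.sum fun _ e => e) ≤ A})
  have hcount : (Fintype.card {n : Fin ℓ →₀ ℕ | (n.sum fun _ e => e) ≤ A} : ℕ)
      = (A + ℓ).choose ℓ := by
    rw [← Nat.card_eq_fintype_card]
    exact card_degreeLE ℓ A
  calc Nat.card S = Fintype.card S := Nat.card_eq_fintype_card
    _ ≤ Module.finrank ℝ (MvPolynomial.restrictTotalDegree (Fin ℓ) ℝ A) := hcard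
    _ = _ := by rw [hrank, hcount]

/-- Rónyai–Babai–Ganapathy: if `P_1,…,P_m` are real polynomials in `ℓ`
variables, `m ≥ ℓ`, each of degree at most `k`, then the number of zero patterns of
`P_1,…,P_m` is at most `C(km - (k-2)ℓ, ℓ)` (here written as `C(k(m-ℓ) + 2ℓ, ℓ)`,
which equals `km - (k-2)ℓ` choose `ℓ` since `m ≥ ℓ`). -/
theorem stmt_8 (m ℓ k : ℕ) (hml : ℓ ≤ m) (P : Fin m → MvPolynomial (Fin ℓ) ℝ)
    (hdeg : ∀ j, (P j).totalDegree ≤ k) :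
    Nat.card {ε : Fin m → Prop |
        ∃ x : Fin ℓ → ℝ, ∀ j, ε j ↔ MvPolynomial.eval x (P j) = 0} ≤
      Nat.choose (k * (m - ℓ) + 2 * ℓ) ℓ := by
  classical
  set Z : Set (Fin m → Prop) := {ε : Fin m → Prop |
      ∃ x : Fin ℓ → ℝ, ∀ j, ε j ↔ MvPolynomial.eval x (P j) = 0} with hZ
  by_cases hk : k = 0
  · -- all polynomials are constant, so there is at most one pattern
    subst hk
    have hconst : ∀ (x y : Fin ℓ → ℝ) (j),
        MvPolynomial.eval x (P j) = MvPolynomial.eval y (P j) := by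
      intro x y j
      have h0 : (P j).totalDegree = 0 := Nat.le_zero.mp (hdeg j)
      rw [MvPolynomial.eval_eq, MvPolynomial.eval_eq]
      refine Finset.sum_congr rfl fun d hd => ?_
      have hz : ∀ i, d i = 0 := fun i =>
        (MvPolynomial.totalDegree_eq_zero_iff _ (P j)).mp h0 d hd i
      simp [hz]
    have h1 : Nat.card Z ≤ 1 := by
      rw [Nat.card_coe_set_eq]
      rw [Set.ncard_le_one (Set.toFinite _)]
      rintro ε ⟨x, hx⟩ ε' ⟨y, hy⟩
      funext j
      apply propext
      rw [hx j, hy j, hconst x y j]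
    refine h1.trans ?_
    exact Nat.succ_le_of_lt (Nat.choose_pos (by omega))
  · set A := k * (m - ℓ) with hA
    set zs : (Fin m → Prop) → Finset (Fin m) :=
      fun ε => Finset.univ.filter (fun j => ε j) with hzs
    set Zf : Set (Fin m → Prop) := {ε | ε ∈ Z ∧ (zs ε).card < ℓ} with hZf
    set Zm : Set (Fin m → Prop) := {ε | ε ∈ Z ∧ ℓ ≤ (zs ε).card} with hZm
    have hsplit : Z ⊆ Zf ∪ Zm := fun ε hε => by
      by_cases h : (zs ε).card < ℓ
      · exact Or.inl ⟨hε, h⟩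
      · exact Or.inr ⟨hε, le_of_not_gt h⟩
    -- bound on patterns with many zeros
    have hm2 : Nat.card Zm ≤ (A + ℓ).choose ℓ := by
      refine many_bound P Zm (fun ε hε => hε.1) ?_
      intro ε t ht
      have hdisj : Disjoint t (zs ε.1) := Finset.disjoint_left.mpr
        (fun j hj hjz => ht j hj ((Finset.mem_filter.mp hjz).2))
      have hcards : t.card + (zs ε.1).card ≤ m := by
        rw [← Finset.card_union_of_disjoint hdisj]
        calc (t ∪ zs ε.1).card ≤ (Finset.univ : Finset (Fin m)).card :=
              Finset.card_le_card (Finset.subset_univ _)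
          _ = m := by rw [Finset.card_univ, Fintype.card_fin]
      have hzcard : ℓ ≤ (zs ε.1).card := ε.2.2
      calc (∏ j ∈ t, P j).totalDegree ≤ ∑ j ∈ t, (P j).totalDegree :=
            MvPolynomial.totalDegree_finset_prod t P
        _ ≤ t.card • k := Finset.sum_le_card_nsmul t _ k (fun j _ => hdeg j)
        _ = t.card * k := by rw [smul_eq_mul]
        _ ≤ (m - ℓ) * k := Nat.mul_le_mul_right k (by omega)
        _ = A := by rw [hA, mul_comm]
    -- bound on patterns with few zeros
    set F : Finset (Finset (Fin m)) :=
      Finset.univ.powerset.filter (fun s => s.card < ℓ) with hF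
    have hinF : ∀ ε : Zf, zs ε.1 ∈ F := fun ε => Finset.mem_filter.mpr
      ⟨Finset.mem_powerset.mpr (Finset.subset_univ _), ε.2.2⟩
    have hf : Nat.card Zf ≤ F.card := by
      have h5 : Nat.card Zf ≤ Nat.card {s // s ∈ F} := by
        apply Nat.card_le_card_of_injective
          (fun ε : Zf => (⟨zs ε.1, hinF ε⟩ : {s // s ∈ F}))
        intro δ ε h
        have h' : zs δ.1 = zs ε.1 := congrArg Subtype.val h
        apply Subtype.ext
        funext j
        apply propext
        have hj := Finset.ext_iff.mp h' j
        simp only [hzs, Finset.mem_filter, Finset.mem_univ, true_and] at hj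
        exact hj
      have h6 : Nat.card {s // s ∈ F} = F.card := by
        rw [Nat.card_eq_fintype_card, Fintype.card_coe]
      omega
    have hFcard : F.card = ∑ i ∈ Finset.range ℓ, m.choose i := by
      have hFeq : F = (Finset.range ℓ).biUnion
          (fun i => Finset.univ.powersetCard i) := by
        ext s
        constructor
        · intro hs
          obtain ⟨-, hcard⟩ := Finset.mem_filter.mp hs
          exact Finset.mem_biUnion.mpr ⟨s.card, Finset.mem_range.mpr hcard,
            Finset.mem_powersetCard.mpr ⟨Finset.subset_univ _, rfl⟩⟩
        · intro hs
          obtain ⟨i, hi, hsi⟩ := Finset.mem_biUnion.mp hs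
          obtain ⟨hsub, hcard⟩ := Finset.mem_powersetCard.mp hsi
          exact Finset.mem_filter.mpr ⟨Finset.mem_powerset.mpr (Finset.subset_univ _),
            by rw [hcard]; exact Finset.mem_range.mp hi⟩
      rw [hFeq, Finset.card_biUnion]
      · refine Finset.sum_congr rfl fun i _ => ?_
        rw [Finset.card_powersetCard, Finset.card_univ, Fintype.card_fin]
      · intro i hi j hj hij
        refine Finset.disjoint_left.mpr fun s hsi hsj => hij ?_
        rw [← (Finset.mem_powersetCard.mp hsi).2, ← (Finset.mem_powersetCard.mp hsj).2]
    have hmA : m ≤ A + ℓ := by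
      have h6 : m - ℓ ≤ k * (m - ℓ) := Nat.le_mul_of_pos_left _ (Nat.pos_of_ne_zero hk)
      omega
    calc Nat.card Z = Z.ncard := Nat.card_coe_set_eq Z
      _ ≤ (Zf ∪ Zm).ncard := Set.ncard_le_ncard hsplit (Set.toFinite _)
      _ ≤ Zf.ncard + Zm.ncard := Set.ncard_union_le _ _
      _ = Nat.card Zf + Nat.card Zm := by
          rw [Nat.card_coe_set_eq, Nat.card_coe_set_eq]
      _ ≤ (∑ i ∈ Finset.range ℓ, m.choose i) + (A + ℓ).choose ℓ :=
          add_le_add (hFcard ▸ hf) hm2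
      _ ≤ (A + 2 * ℓ).choose ℓ := final_ineq ℓ A m hmA
end

section
/- For every d ≥ 4, every bipartite graph on fewer than 2d vertices can be realized as a faithful unit distance graph in R^d, and there exists a bipartite graph on exactly 2d vertices (namely K_{d,d} minus a matching of size d-3) that cannot; hence the minimum number of vertices of a bipartite graph not realizable as a faithful distance graph in R^d equals 2d. -/
/-!
If `p + q < 2d`, one side, say the one of size `p`, has fewer than `d` vertices. Place its
vertices at `e_i / 4` in `ℝ^(p+1)` and the `j`-th vertex of the other side at the point whose
`i`-th coordinate is `±γ_j`, the sign recording adjacency to `i`, with a last coordinate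
chosen so that adjacent pairs are at distance `1` and non-adjacent ones at distance
`√(1 + γ_j)`. Each side lies in a ball of radius `1/2`, so no other unit distances occur.

For `K_{d,d}` minus a matching on the vertices `i ≥ 3`, polarization turns unit distances into
orthogonality of the differences `α_i = a_i - a_0`, `β_j = b_j - b_0`: indeed
`2⟪α_i, β_j⟫ = 1 - dist(a_i, b_j)²`. So `α_1, α_2` are orthogonal to every `β_j`, `β_1, β_2` to
every `α_i`, and the matched pairs `(α_i, β_i)`, `i ≥ 3`, form a biorthogonal system. Since
three distinct points on a sphere are affinely independent, `α_1, α_2, β_1, β_2, β_3, …,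
β_(d-1)` are `d + 1` linearly independent vectors in `ℝ^d`.
-/

/-- A graph is realizable as a faithful unit distance graph in `ℝ^d`. -/
def FDRealizable {V : Type} (G : SimpleGraph V) (d : ℕ) : Prop :=
  ∃ f : V → EuclideanSpace ℝ (Fin d), Function.Injective f ∧
    ∀ u v, u ≠ v → (G.Adj u v ↔ dist (f u) (f v) = 1)

open Module
open scoped RealInnerProductSpace

section InnerProductSpace

variable {E : Type*} [NormedAddCommGroup E] [InnerProductSpace ℝ E]

theorem two_mul_inner_sub_sub (p p' q q' : E) :
    2 * ⟪p' - p, q' - q⟫ = ‖p - q'‖ ^ 2 + ‖p' - q‖ ^ 2 - ‖p - q‖ ^ 2 - ‖p' - q'‖ ^ 2 := by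
  simp only [norm_sub_sq_real, inner_sub_left, inner_sub_right]
  ring

theorem linearIndependent_sub_of_dist_eq {p : Fin 3 → E} (hp : Function.Injective p) {c : E}
    {r : ℝ} (h : ∀ k, dist (p k) c = r) :
    LinearIndependent ℝ fun k : {k : Fin 3 // k ≠ 0} => p k - p 0 :=
  (affineIndependent_iff_linearIndependent_vsub ℝ p 0).mp <|
    EuclideanGeometry.Cospherical.affineIndependent ⟨c, r, Set.forall_mem_range.2 h⟩
      subset_rfl hp

variable {ι κ μ : Type*} [Fintype ι] [Fintype κ] [Fintype μ]

theorem linearIndependent_sumElim_of_biorthogonal {a b : ι → E} {y : κ → E}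
    (hy : LinearIndependent ℝ y) (hay : ∀ i l, ⟪a i, y l⟫ = 0)
    (hab : ∀ i j, i ≠ j → ⟪a i, b j⟫ = 0) (haa : ∀ i, ⟪a i, b i⟫ ≠ 0) :
    LinearIndependent ℝ (Sum.elim y b) := by
  rw [Fintype.linearIndependent_iff]
  intro g hg
  simp only [Fintype.sum_sum_type, Sum.elim_inl, Sum.elim_inr] at hg
  have hb : ∀ i, g (Sum.inr i) = 0 := fun i => by
    have h := congrArg (⟪a i, ·⟫) hg
    simp only [inner_add_right, inner_zero_right, inner_sum, inner_smul_right, hay, mul_zero,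
      Finset.sum_const_zero, zero_add] at h
    rw [Finset.sum_eq_single i (fun j _ hj => by rw [hab i j hj.symm, mul_zero]) (by simp)] at h
    exact (mul_eq_zero.mp h).resolve_right (haa i)
  simp only [hb, zero_smul, Finset.sum_const_zero, add_zero] at hg
  rintro (l | i)
  · exact Fintype.linearIndependent_iff.mp hy _ hg l
  · exact hb i

theorem card_add_card_le_finrank_of_orthogonal [FiniteDimensional ℝ E] {x : μ → E} {w : κ → E}
    (hx : LinearIndependent ℝ x) (hw : LinearIndependent ℝ w)
    (hxw : ∀ k l, ⟪x k, w l⟫ = 0) : Fintype.card μ + Fintype.card κ ≤ finrank ℝ E := by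
  have hortho : Submodule.span ℝ (Set.range x) ⟂ Submodule.span ℝ (Set.range w) := by
    rw [Submodule.isOrtho_span]
    rintro _ ⟨k, rfl⟩ _ ⟨l, rfl⟩
    exact hxw k l
  simpa using (hx.sum_type hw hortho.disjoint).fintype_card_le_finrank

theorem add_four_le_finrank_of_kprime [FiniteDimensional ℝ E] {n : ℕ} {a b : Fin (n + 3) → E}
    (ha : Function.Injective a) (hb : Function.Injective b)
    (hab : ∀ i j, dist (a i) (b j) = 1 ↔ ¬(i = j ∧ 3 ≤ i.val)) : n + 4 ≤ finrank ℝ E := by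
  have hinner : ∀ i j, ⟪a i - a 0, b j - b 0⟫ = 0 ↔ ¬(i = j ∧ 3 ≤ i.val) := by
    intro i j
    have h := two_mul_inner_sub_sub (a 0) (a i) (b 0) (b j)
    simp only [← dist_eq_norm, (hab 0 j).2 (by simp), (hab 0 0).2 (by simp),
      (hab i 0).2 (by rintro ⟨rfl, h⟩; simp at h)] at h
    rw [← hab]
    have := dist_nonneg (x := a i) (y := b j)
    constructor <;> intro h' <;> nlinarith
  set low : Fin 3 → Fin (n + 3) := Fin.castLE (by omega)
  set high : Fin n → Fin (n + 3) := fun m => Fin.addNat m 3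
  have hlow : ∀ k j, ⟪a (low k) - a 0, b j - b 0⟫ = 0 := fun k j =>
    (hinner _ _).2 fun h => by have := h.2; simp [low] at this; omega
  have hhigh : ∀ m i, ⟪a (high m) - a 0, b i - b 0⟫ = 0 ↔ high m ≠ i := fun m i => by
    simp [hinner, high]
  have hx : LinearIndependent ℝ fun k : {k : Fin 3 // k ≠ 0} => a (low k) - a 0 :=
    linearIndependent_sub_of_dist_eq (ha.comp (Fin.castLE_injective _)) (c := b 0)
      fun k => (hab (low k) 0).2 fun h => by have := h.2; simp [low] at this; omega
  have hy : LinearIndependent ℝ fun k : {k : Fin 3 // k ≠ 0} => b (low k) - b 0 :=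
    linearIndependent_sub_of_dist_eq (hb.comp (Fin.castLE_injective _)) (c := a 0)
      fun k => by rw [dist_comm]; exact (hab 0 (low k)).2 (by simp)
  have hyb := linearIndependent_sumElim_of_biorthogonal hy (a := fun m => a (high m) - a 0)
    (b := fun m => b (high m) - b 0)
    (fun m k => (hhigh m _).2 fun h => by
      have := congrArg Fin.val h
      simp only [high, low, Fin.val_addNat, Fin.val_castLE] at this
      omega)
    (fun m m' hmm' => (hhigh m _).2 fun h => hmm' (by simpa [high] using h))
    (fun m => by simp [hhigh])
  have := card_add_card_le_finrank_of_orthogonal hx hyb (by rintro k (l | m) <;> exact hlow _ _)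
  simpa [show Fintype.card {k : Fin 3 // k ≠ 0} = 2 from rfl, add_comm, add_left_comm] using this

end InnerProductSpace

theorem EuclideanSpace.exists_isometry_of_card_le {ι : Type*} [Fintype ι] {n : ℕ}
    (h : Fintype.card ι ≤ n) :
    ∃ f : EuclideanSpace ℝ ι → EuclideanSpace ℝ (Fin n), Isometry f := by
  obtain ⟨e⟩ := Function.Embedding.nonempty_of_card_le (h.trans (Fintype.card_fin n).ge)
  let v := (EuclideanSpace.basisFun ι ℝ).toBasis
  let w := EuclideanSpace.basisFun (Fin n) ℝ
  have hv : Orthonormal ℝ v := by simp [v]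
  have hvw : ⇑(v.constr ℝ (w ∘ e)) ∘ ⇑v = ⇑w ∘ e := funext (v.constr_basis ℝ _)
  exact ⟨_, ((v.constr ℝ (w ∘ e)).isometryOfOrthonormal hv
    (by rw [hvw]; exact w.orthonormal.comp e e.injective)).isometry⟩

structure BipartiteUnitRealization {X : Type*} [MetricSpace X] {α β : Type*}
    (R : α → β → Prop) (a : α → X) (b : β → X) : Prop where
  injective_left : Function.Injective a
  injective_right : Function.Injective b
  dist_left_lt : ∀ i i', dist (a i) (a i') < 1
  dist_right_lt : ∀ j j', dist (b j) (b j') < 1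
  one_le_dist : ∀ i j, 1 ≤ dist (a i) (b j)
  dist_eq_one_iff : ∀ i j, dist (a i) (b j) = 1 ↔ R i j

namespace BipartiteUnitRealization

section General

variable {X : Type*} [MetricSpace X] {α β : Type*} {R : α → β → Prop} {a : α → X} {b : β → X}

theorem symm (h : BipartiteUnitRealization R a b) :
    BipartiteUnitRealization (fun j i => R i j) b a where
  injective_left := h.injective_right
  injective_right := h.injective_left
  dist_left_lt := h.dist_right_lt
  dist_right_lt := h.dist_left_lt
  one_le_dist j i := dist_comm (a i) (b j) ▸ h.one_le_dist i j
  dist_eq_one_iff j i := dist_comm (a i) (b j) ▸ h.dist_eq_one_iff i j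

theorem fdRealizable {p q d : ℕ} {K : SimpleGraph (Fin p ⊕ Fin q)}
    (hK : ∀ u v, K.Adj u v → u.isLeft ≠ v.isLeft) {a : Fin p → X} {b : Fin q → X}
    (h : BipartiteUnitRealization (fun i j => K.Adj (.inl i) (.inr j)) a b)
    {f : X → EuclideanSpace ℝ (Fin d)} (hf : Isometry f) : FDRealizable K d := by
  refine ⟨f ∘ Sum.elim a b, hf.injective.comp ?_, ?_⟩
  · exact h.injective_left.sumElim h.injective_right fun i j hij =>
      absurd (h.one_le_dist i j) (by simp [hij])
  · rintro (i | j) (i' | j') hne <;>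
      simp only [Function.comp_apply, hf.dist_eq, Sum.elim_inl, Sum.elim_inr]
    · exact iff_of_false (fun hadj => by simpa using hK _ _ hadj) (h.dist_left_lt i i').ne
    · exact (h.dist_eq_one_iff i j').symm
    · rw [K.adj_comm, dist_comm]; exact (h.dist_eq_one_iff i' j).symm
    · exact iff_of_false (fun hadj => by simpa using hK _ _ hadj) (h.dist_right_lt j j').ne

end General

noncomputable section

variable {p q : ℕ}

def slope (p : ℕ) (j : Fin q) : ℝ := (j + 1) / (8 * (p + 1) * (q + 1))

theorem slope_pos (j : Fin q) : 0 < slope p j := by unfold slope; positivity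

theorem mul_slope_le (j : Fin q) : (p + 1) * slope p j ≤ 1 / 8 := by
  have hj : (j : ℝ) + 1 ≤ q + 1 := by have := j.isLt; norm_cast; omega
  rw [slope, mul_div_assoc', div_le_iff₀ (by positivity)]
  nlinarith

theorem slope_injective : Function.Injective (slope (q := q) p) := by
  intro j j' h
  rw [slope, slope, div_left_inj' (by positivity)] at h
  exact Fin.ext (by exact_mod_cast add_right_cancel h)

def leftPt (i : Fin p) : EuclideanSpace ℝ (Option (Fin p)) :=
  EuclideanSpace.single (some i) (1 / 4)

def height (p : ℕ) (j : Fin q) : ℝ := √(15 / 16 + slope p j / 2 - p * slope p j ^ 2)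

variable (R : Fin p → Fin q → Prop) [DecidableRel R]

def rightPt (j : Fin q) : EuclideanSpace ℝ (Option (Fin p)) :=
  WithLp.toLp 2 fun o => o.elim (height p j) fun k => if R k j then slope p j else -slope p j

theorem height_sq (j : Fin q) :
    height p j ^ 2 = 15 / 16 + slope p j / 2 - p * slope p j ^ 2 := by
  have := mul_slope_le (p := p) j
  have := slope_pos (p := p) j
  exact Real.sq_sqrt (by nlinarith)

theorem norm_rightPt_sq (j : Fin q) : ‖rightPt R j‖ ^ 2 = 15 / 16 + slope p j / 2 := by
  rw [EuclideanSpace.real_norm_sq_eq, Fintype.sum_option]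
  simp [rightPt, height_sq, apply_ite (· ^ 2)]

theorem inner_leftPt_rightPt (i : Fin p) (j : Fin q) :
    ⟪leftPt i, rightPt R j⟫ = (if R i j then slope p j else -slope p j) / 4 := by
  simp [leftPt, rightPt, EuclideanSpace.inner_single_left]
  split_ifs <;> ring

theorem dist_leftPt_rightPt_sq (i : Fin p) (j : Fin q) :
    dist (leftPt i) (rightPt R j) ^ 2 = if R i j then 1 else 1 + slope p j := by
  rw [dist_eq_norm, norm_sub_sq_real, inner_leftPt_rightPt, norm_rightPt_sq]
  simp [leftPt]
  split_ifs <;> ring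

theorem dist_rightPt_single_none_lt (j : Fin q) :
    dist (rightPt R j) (EuclideanSpace.single none 1) < 1 / 2 := by
  have hsq : dist (rightPt R j) (EuclideanSpace.single none 1) ^ 2 =
      31 / 16 + slope p j / 2 - 2 * height p j := by
    rw [dist_eq_norm, norm_sub_sq_real, real_inner_comm, EuclideanSpace.inner_single_left,
      norm_rightPt_sq]
    simp [rightPt]
    ring
  have hγ := mul_slope_le (p := p) j
  have hγ0 := slope_pos (p := p) j
  have hh : 27 / 32 + slope p j / 4 < height p j := by
    rw [height, Real.lt_sqrt (by positivity)]
    nlinarith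
  nlinarith [dist_nonneg (x := rightPt R j) (y := EuclideanSpace.single none 1)]

theorem leftPt_rightPt : BipartiteUnitRealization R leftPt (rightPt R) where
  injective_left i i' h := by
    by_contra hne
    simpa [leftPt, hne] using congrArg (fun x => x (some i)) h
  injective_right j j' h := slope_injective <| by
    have := congrArg (‖·‖ ^ 2) h
    simp only [norm_rightPt_sq] at this
    linarith
  dist_left_lt i i' :=
    calc dist (leftPt i) (leftPt i') ≤ dist (leftPt i) 0 + dist (leftPt i') 0 :=
          dist_triangle_right _ _ _
      _ < 1 := by simp [leftPt]; norm_num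
  dist_right_lt j j' :=
    calc dist (rightPt R j) (rightPt R j') ≤ _ :=
          dist_triangle_right _ _ (EuclideanSpace.single none 1)
      _ < 1 := by linarith [dist_rightPt_single_none_lt R j, dist_rightPt_single_none_lt R j']
  one_le_dist i j := by
    have h := dist_leftPt_rightPt_sq R i j
    have := slope_pos (p := p) j
    split_ifs at h <;> nlinarith [dist_nonneg (x := leftPt i) (y := rightPt R j)]
  dist_eq_one_iff i j := by
    rw [← pow_eq_one_iff_of_nonneg dist_nonneg two_ne_zero, dist_leftPt_rightPt_sq]
    have := slope_pos (p := p) j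
    split_ifs with hR <;> simp [hR, this.ne']

end

end BipartiteUnitRealization

/-- for `d ≥ 4`, every bipartite graph on fewer than `2d` vertices is
realizable as a faithful unit distance graph in `ℝ^d`, while the `2d`-vertex bipartite graph
`K_{d,d}` minus a matching of size `d - 3` is not; hence the minimum number of vertices of a
bipartite graph not realizable as a faithful distance graph in `ℝ^d` is exactly `2d`. -/
theorem stmt_13 (d : ℕ) (hd : 4 ≤ d) :
    (∀ p q : ℕ, p + q < 2 * d → ∀ K : SimpleGraph (Fin p ⊕ Fin q),
      (∀ u v, K.Adj u v → u.isLeft ≠ v.isLeft) → FDRealizable K d) ∧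
    ¬ FDRealizable (Kprime d) d := by
  constructor
  · intro p q hpq K hK
    classical
    rcases (by omega : p + 1 ≤ d ∨ q + 1 ≤ d) with hp | hq
    · obtain ⟨f, hf⟩ := EuclideanSpace.exists_isometry_of_card_le (ι := Option (Fin p))
        (by simpa using hp)
      exact (BipartiteUnitRealization.leftPt_rightPt _).fdRealizable hK hf
    · obtain ⟨f, hf⟩ := EuclideanSpace.exists_isometry_of_card_le (ι := Option (Fin q))
        (by simpa using hq)
      exact (BipartiteUnitRealization.leftPt_rightPt
        fun j i => K.Adj (.inl i) (.inr j)).symm.fdRealizable hK hf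
  · rintro ⟨f, hf, hadj⟩
    obtain ⟨n, rfl⟩ : ∃ n, d = n + 3 := ⟨d - 3, by omega⟩
    have := add_four_le_finrank_of_kprime (hf.comp Sum.inl_injective)
      (hf.comp Sum.inr_injective) fun i j =>
        (hadj _ _ Sum.inl_ne_inr).symm.trans (by simp [Kprime, SimpleGraph.fromRel_adj])
    simp at this
end

section
/- For positive integers m, s, d: if C(m,s) · 2^{1 - C(s,2)} · |FD_s(d)| < 1, where |FD_s(d)| is the number of labelled faithful unit distance graphs on s vertices in R^d, then R_FD(s,s,d) > m; i.e., there exists a graph G on m vertices such that neither G nor its complement contains an induced s-vertex subgraph isomorphic to a faithful distance graph in R^d. -/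
open Finset
open scoped symmDiff

namespace SimpleGraph

variable {V : Type*}

theorem card_eq_two_pow_choose_two [Finite V] :
    Nat.card (SimpleGraph V) = 2 ^ (Nat.card V).choose 2 := by
  classical
  have := Fintype.ofFinite V
  rw [Nat.card_eq_fintype_card, Nat.card_eq_fintype_card]
  refine (Fintype.card_congr ?_).trans
    ((card_topEdgeLabeling (V := V) (K := Fin 2)).trans (by simp))
  exact ⟨fun G => G.toTopEdgeLabeling, fun C => C.labelGraph 1,
    fun G => toTopEdgeLabeling_labelGraph G,
    fun C => by convert TopEdgeLabeling.labelGraph_toTopEdgeLabeling C⟩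

theorem induce_symmDiff (s : Set V) (G H : SimpleGraph V) :
    (G ∆ H).induce s = G.induce s ∆ H.induce s := by
  ext; simp [symmDiff_def]

theorem card_induce_eq_card_induce_eq (s : Set V) (H H' : SimpleGraph s) :
    Nat.card {G : SimpleGraph V // G.induce s = H} =
      Nat.card {G : SimpleGraph V // G.induce s = H'} := by
  set L := (H ∆ H').map (Function.Embedding.subtype _)
  have hL : L.induce s = H ∆ H' := comap_map_eq _ _
  refine Nat.card_congr <| ((symmDiff_left_involutive L).toPerm _).subtypeEquiv fun G => ?_
  rw [Function.Involutive.coe_toPerm, induce_symmDiff, hL]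
  constructor
  · rintro rfl; exact symmDiff_symmDiff_cancel_left _ _
  · intro h; rw [← symmDiff_symmDiff_cancel_right (H ∆ H') (G.induce s), h,
      symmDiff_comm H, symmDiff_symmDiff_cancel_left]

theorem card_induce_mul_card [Finite V] (s : Set V) (P : SimpleGraph s → Prop) :
    Nat.card {G : SimpleGraph V // P (G.induce s)} * Nat.card (SimpleGraph s) =
      Nat.card {H : SimpleGraph s // P H} * Nat.card (SimpleGraph V) := by
  classical
  have := Fintype.ofFinite V
  have card_eq (Q : SimpleGraph s → Prop) : Nat.card {G : SimpleGraph V // Q (G.induce s)} =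
      Nat.card {H // Q H} * Nat.card {G : SimpleGraph V // G.induce s = ⊥} := by
    rw [← Nat.card_congr (Equiv.sigmaSubtypeFiberEquivSubtype (induce s) fun _ => Iff.rfl),
      Nat.card_sigma]
    simp_rw [card_induce_eq_card_induce_eq s _ ⊥]
    rw [sum_const, card_univ, smul_eq_mul, ← Nat.card_eq_fintype_card]
  have h := card_eq fun _ => True
  rw [Nat.card_congr (Equiv.subtypeUnivEquiv fun _ => trivial),
    Nat.card_congr (Equiv.subtypeUnivEquiv fun _ => trivial)] at h
  rw [card_eq, h]
  ring

end SimpleGraph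

theorem Finset.card_biUnion_mul_le_card_mul {ι α : Type*} [DecidableEq α] (T : Finset ι)
    (A : ι → Finset α) {c B : ℕ} (h : ∀ t ∈ T, #(A t) * c ≤ B) :
    #(T.biUnion A) * c ≤ #T * B :=
  calc #(T.biUnion A) * c ≤ ∑ t ∈ T, #(A t) * c := by
        rw [← sum_mul]; gcongr; exact card_biUnion_le
    _ ≤ #T * B := by simpa using sum_le_card_nsmul _ _ _ h

theorem mul_two_mul_lt_two_pow_of_mul_zpow_lt {a n c : ℕ}
    (h : (a : ℝ) * 2 ^ ((1 : ℤ) - c) * n < 1) : a * 2 * n < 2 ^ c := by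
  rw [zpow_sub₀ two_ne_zero, zpow_one, zpow_natCast] at h
  have : ((a * 2 * n : ℕ) : ℝ) < (2 ^ c : ℕ) := by
    push_cast
    calc (a * 2 * n : ℝ) = a * (2 / 2 ^ c) * n * 2 ^ c := by field_simp
      _ < 1 * 2 ^ c := by gcongr
      _ = 2 ^ c := one_mul _
  exact_mod_cast this

theorem FDRealizable.comap {V W : Type} {G : SimpleGraph W} {d : ℕ} (f : V ↪ W)
    (hG : FDRealizable G d) : FDRealizable (G.comap f) d := by
  obtain ⟨φ, hφ, hadj⟩ := hG
  exact ⟨φ ∘ f, hφ.comp f.injective, fun u v huv => hadj _ _ (f.injective.ne huv)⟩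

theorem fdRealizable_simpleGraph_iff {V W : Type} {d : ℕ} (e : V ≃ W) (G : SimpleGraph V) :
    FDRealizable (e.simpleGraph G) d ↔ FDRealizable G d :=
  ⟨fun h => by simpa using h.comap e.toEmbedding, fun h => h.comap e.symm.toEmbedding⟩

theorem card_fdRealizable_congr {V W : Type} {d : ℕ} (e : V ≃ W) :
    Nat.card {G : SimpleGraph V // FDRealizable G d} =
      Nat.card {G : SimpleGraph W // FDRealizable G d} :=
  Nat.card_congr <| e.simpleGraph.subtypeEquiv fun G => (fdRealizable_simpleGraph_iff e G).symm

theorem card_fdRealizable_induce_mul {V : Type} [Finite V] {s : ℕ} (d : ℕ) (t : Finset V)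
    (ht : t.card = s) :
    Nat.card {G : SimpleGraph V // FDRealizable (G.induce t) d} * 2 ^ s.choose 2 =
      Nat.card {H : SimpleGraph (Fin s) // FDRealizable H d} * 2 ^ (Nat.card V).choose 2 := by
  have h := SimpleGraph.card_induce_mul_card (t : Set V) (FDRealizable · d)
  rwa [SimpleGraph.card_eq_two_pow_choose_two, SimpleGraph.card_eq_two_pow_choose_two,
    Nat.card_coe_set_eq, Set.ncard_coe_finset, ht,
    card_fdRealizable_congr (V := (t : Set V)) (t.equivFinOfCardEq ht)] at h

theorem card_fdRealizable_induce_or_compl_le {V : Type} [Finite V] {s : ℕ} (d : ℕ)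
    (t : Finset V) (ht : t.card = s) :
    Nat.card {G : SimpleGraph V // FDRealizable (G.induce t) d ∨ FDRealizable (Gᶜ.induce t) d} *
        2 ^ s.choose 2 ≤
      2 * Nat.card {H : SimpleGraph (Fin s) // FDRealizable H d} * 2 ^ (Nat.card V).choose 2 := by
  classical
  have := Fintype.ofFinite V
  have hcompl : Nat.card {G : SimpleGraph V // FDRealizable (Gᶜ.induce t) d} =
      Nat.card {G : SimpleGraph V // FDRealizable (G.induce t) d} :=
    Nat.card_congr <| (compl_involutive.toPerm _).subtypeEquiv fun _ => Iff.rfl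
  calc _ ≤ (Nat.card {G : SimpleGraph V // FDRealizable (G.induce t) d} +
        Nat.card {G : SimpleGraph V // FDRealizable (Gᶜ.induce t) d}) * 2 ^ s.choose 2 := by
        gcongr
        simp only [Nat.card_eq_fintype_card]
        exact Fintype.card_subtype_or _ _
    _ = _ := by rw [hcompl, ← two_mul, mul_assoc, card_fdRealizable_induce_mul d t ht, mul_assoc]

theorem stmt_14_general (m s d : ℕ)
    (h : (Nat.choose m s : ℝ) * (2 : ℝ) ^ ((1 : ℤ) - (Nat.choose s 2 : ℤ)) *
        (Nat.card {G : SimpleGraph (Fin s) | FDRealizable G d} : ℝ) < 1) :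
    ∃ G : SimpleGraph (Fin m),
      (¬ ∃ t : Finset (Fin m), t.card = s ∧ FDRealizable (G.induce (↑t : Set (Fin m))) d) ∧
      (¬ ∃ t : Finset (Fin m), t.card = s ∧ FDRealizable (Gᶜ.induce (↑t : Set (Fin m))) d) := by
  classical
  set N := Nat.card {G : SimpleGraph (Fin s) | FDRealizable G d}
  let bad (t : Finset (Fin m)) : Finset (SimpleGraph (Fin m)) :=
    {G | FDRealizable (G.induce t) d ∨ FDRealizable (Gᶜ.induce t) d}
  have hbad (t) (ht : t ∈ powersetCard s univ) :
      #(bad t) * 2 ^ s.choose 2 ≤ 2 * N * 2 ^ m.choose 2 := by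
    have := card_fdRealizable_induce_or_compl_le d t (mem_powersetCard_univ.mp ht)
    rwa [Nat.card_eq_fintype_card, Fintype.card_subtype, Nat.card_fin] at this
  have hlt : #((powersetCard s univ).biUnion bad) < #(univ : Finset (SimpleGraph (Fin m))) := by
    rw [card_univ, ← Nat.card_eq_fintype_card, SimpleGraph.card_eq_two_pow_choose_two,
      Nat.card_fin]
    refine Nat.lt_of_mul_lt_mul_right (a := 2 ^ s.choose 2) ?_
    calc _ ≤ m.choose s * (2 * N * 2 ^ m.choose 2) := by
          simpa using card_biUnion_mul_le_card_mul _ _ hbad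
      _ < 2 ^ m.choose 2 * 2 ^ s.choose 2 := by
          rw [← mul_assoc, ← mul_assoc, mul_comm _ (2 ^ s.choose 2)]
          gcongr
          exact mul_two_mul_lt_two_pow_of_mul_zpow_lt h
  obtain ⟨G, -, hG⟩ := exists_mem_notMem_of_card_lt_card hlt
  simp only [bad, mem_biUnion, mem_filter, mem_univ, true_and, mem_powersetCard_univ,
    not_exists, not_and, not_or] at hG
  exact ⟨G, fun ⟨t, ht, hGt⟩ => (hG t ht).1 hGt, fun ⟨t, ht, hGt⟩ => (hG t ht).2 hGt⟩

/-- if `C(m,s) · 2^{1 - C(s,2)} · |FD_s(d)| < 1` (where `|FD_s(d)|` is the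
number of labelled faithful unit distance graphs on `s` vertices in `ℝ^d`), then
`R_FD(s,s,d) > m`: some graph `G` on `m` vertices is such that neither `G` nor its
complement contains an induced `s`-vertex subgraph isomorphic to a faithful distance graph
in `ℝ^d`. -/
theorem stmt_14 (m s d : ℕ) (hm : 1 ≤ m) (hs : 1 ≤ s) (hd : 1 ≤ d)
    (h : (Nat.choose m s : ℝ) * (2 : ℝ) ^ ((1 : ℤ) - (Nat.choose s 2 : ℤ)) *
        (Nat.card {G : SimpleGraph (Fin s) | FDRealizable G d} : ℝ) < 1) :
    ∃ G : SimpleGraph (Fin m),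
      (¬ ∃ t : Finset (Fin m), t.card = s ∧ FDRealizable (G.induce (↑t : Set (Fin m))) d) ∧
      (¬ ∃ t : Finset (Fin m), t.card = s ∧ FDRealizable (Gᶜ.induce (↑t : Set (Fin m))) d) :=
  stmt_14_general m s d h
end

section
/- Let n, d be positive integers and let B be a set of size b = ⌈n / log₂ n⌉ with b ≥ d, and A a set of size n - b with C(b,d) ≥ |A|. Then the number of labelled faithful unit distance graphs on n vertices in R^d is at least |A|! · C(C(b,d), |A|). -/
/-!
Realise the bipartite graph in which every `a ∈ A` is joined to a `d`-set `ψ a ⊆ B`, with `ψ`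
injective. For `d ≥ 2` put `B` in the hyperplane `ℝ^(d-1) × {0}` in general position (any `d`
points affinely independent, no `d + 1` on a sphere); this is reached one point at a time since
proper affine subspaces and spheres are Haar-null. The circumsphere (centre `c`, radius `r`) of
`ψ a` then meets `B` exactly in `ψ a`, and after shrinking the configuration the point
`(c, √(1 - r²))` is at distance `1` from exactly `ψ a`, all other distances being `< 1`. For
`d = 1` the graph is a matching with isolated vertices and lies on a line. Injective maps from an
`(n - b)`-set into the `d`-subsets of a `b`-set give pairwise distinct graphs on `n` labelled
vertices, and there are `(n - b)! · C(C(b, d), n - b)` of them.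
-/

open Function Module EuclideanGeometry MeasureTheory

section UnitDistance

variable {V W X Y : Type*} [MetricSpace X] [MetricSpace Y]

def IsUnitDistEmbedding (G : SimpleGraph V) (f : V → X) : Prop :=
  Injective f ∧ ∀ i j, i ≠ j → (G.Adj i j ↔ dist (f i) (f j) = 1)

theorem IsUnitDistEmbedding.isometry_comp {G : SimpleGraph V} {f : V → X} {φ : X → Y}
    (hf : IsUnitDistEmbedding G f) (hφ : Isometry φ) : IsUnitDistEmbedding G (φ ∘ f) :=
  ⟨hφ.injective.comp hf.1, fun i j hij => by
    simpa only [comp_apply, hφ.dist_eq] using hf.2 i j hij⟩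

theorem IsUnitDistEmbedding.map_equiv {G : SimpleGraph V} {f : V → X}
    (hf : IsUnitDistEmbedding G f) (e : V ≃ W) :
    IsUnitDistEmbedding (G.map e.toEmbedding) (f ∘ e.symm) := by
  refine ⟨hf.1.comp e.symm.injective, fun i j hij => ?_⟩
  obtain ⟨i, rfl⟩ := e.surjective i
  obtain ⟨j, rfl⟩ := e.surjective j
  simpa only [comp_apply, Equiv.symm_apply_apply, Equiv.coe_toEmbedding] using
    (SimpleGraph.map_adj_apply (f := e.toEmbedding)).trans (hf.2 i j (ne_of_apply_ne e hij))

end UnitDistance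

namespace SimpleGraph

variable {A B : Type*}

def bipartiteOf (ψ : A → Finset B) : SimpleGraph (B ⊕ A) where
  Adj
    | .inl j, .inr a => j ∈ ψ a
    | .inr a, .inl j => j ∈ ψ a
    | _, _ => False
  symm := ⟨by rintro (j | a) (j' | a') <;> simp⟩
  loopless := ⟨by rintro (j | a) <;> simp⟩

@[simp] theorem bipartiteOf_adj_inl_inr (ψ : A → Finset B) (j : B) (a : A) :
    (bipartiteOf ψ).Adj (.inl j) (.inr a) ↔ j ∈ ψ a := Iff.rfl

@[simp] theorem bipartiteOf_adj_inr_inl (ψ : A → Finset B) (j : B) (a : A) :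
    (bipartiteOf ψ).Adj (.inr a) (.inl j) ↔ j ∈ ψ a := Iff.rfl

theorem not_bipartiteOf_adj_inl_inl (ψ : A → Finset B) (i j : B) :
    ¬ (bipartiteOf ψ).Adj (.inl i) (.inl j) := id

theorem not_bipartiteOf_adj_inr_inr (ψ : A → Finset B) (a a' : A) :
    ¬ (bipartiteOf ψ).Adj (.inr a) (.inr a') := id

theorem bipartiteOf_injective :
    Injective (bipartiteOf : (A → Finset B) → SimpleGraph (B ⊕ A)) := by
  intro ψ ψ' h
  funext a
  ext j
  rw [← bipartiteOf_adj_inl_inr, h, bipartiteOf_adj_inl_inr]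

end SimpleGraph

structure IsUnitDistRealization {A B X : Type*} [MetricSpace X] (ψ : A → Finset B)
    (fB : B → X) (fA : A → X) : Prop where
  injective_left : Injective fB
  dist_left_ne_one : ∀ i j, i ≠ j → dist (fB i) (fB j) ≠ 1
  dist_right_ne_one : ∀ a a', a ≠ a' → dist (fA a) (fA a') ≠ 1
  dist_eq_one_iff : ∀ j a, dist (fB j) (fA a) = 1 ↔ j ∈ ψ a

namespace IsUnitDistRealization

variable {A B X : Type*} [MetricSpace X] {ψ : A → Finset B} {fB : B → X} {fA : A → X}

theorem isUnitDistEmbedding (h : IsUnitDistRealization ψ fB fA) (hψ : Injective ψ)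
    (hne : ∀ a, (ψ a).Nonempty) :
    IsUnitDistEmbedding (SimpleGraph.bipartiteOf ψ) (Sum.elim fB fA) := by
  have hright : Injective fA := by
    intro a a' haa
    apply hψ
    ext j
    rw [← h.dist_eq_one_iff, ← h.dist_eq_one_iff, haa]
  -- `fA a` is at distance `1` from some point of `fB`, but no point of `fB` is
  have hcross : ∀ j a, fB j ≠ fA a := by
    intro j a hja
    obtain ⟨j', hj'⟩ := hne a
    have hjj' : dist (fB j) (fB j') = 1 := by
      rw [hja, dist_comm, h.dist_eq_one_iff]
      exact hj'
    by_cases hj : j = j'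
    · subst hj
      simp at hjj'
    · exact h.dist_left_ne_one j j' hj hjj'
  refine ⟨h.injective_left.sumElim hright hcross, ?_⟩
  rintro (j | a) (j' | a') hne'
  · exact iff_of_false (SimpleGraph.not_bipartiteOf_adj_inl_inl ψ j j')
      (h.dist_left_ne_one j j' (by simpa using hne'))
  · simpa using (h.dist_eq_one_iff j a').symm
  · simpa [dist_comm] using (h.dist_eq_one_iff j' a).symm
  · exact iff_of_false (SimpleGraph.not_bipartiteOf_adj_inr_inr ψ a a')
      (h.dist_right_ne_one a a' (by simpa using hne'))

end IsUnitDistRealization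

theorem IsUnitDistRealization.exists_isUnitDistEmbedding_euclideanSpace {A B X : Type*}
    [NormedAddCommGroup X] [InnerProductSpace ℝ X] [FiniteDimensional ℝ X] {ψ : A → Finset B}
    {fB : B → X} {fA : A → X} {d : ℕ}
    (h : IsUnitDistRealization ψ fB fA) (hψ : Injective ψ) (hne : ∀ a, (ψ a).Nonempty)
    (hX : finrank ℝ X = d) :
    ∃ f : B ⊕ A → EuclideanSpace ℝ (Fin d),
      IsUnitDistEmbedding (SimpleGraph.bipartiteOf ψ) f :=
  ⟨_, (h.isUnitDistEmbedding hψ hne).isometry_comp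
    ((stdOrthonormalBasis ℝ X).reindex (finCongr hX)).repr.isometry⟩

theorem Int.dist_cast_eq_one_iff (x y : ℤ) : dist (x : ℝ) y = 1 ↔ x = y + 1 ∨ y = x + 1 := by
  rw [Real.dist_eq, ← Int.cast_sub, ← Int.cast_abs, Int.cast_eq_one, abs_eq zero_le_one]
  omega

theorem exists_isUnitDistRealization_real {A B : Type*} [Countable B] (ψ : A → Finset B)
    (hcard : ∀ a, (ψ a).card = 1) :
    ∃ (fB : B → ℝ) (fA : A → ℝ), IsUnitDistRealization ψ fB fA := by
  obtain ⟨e, he⟩ := Countable.exists_injective_nat B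
  choose g hg using fun a => Finset.card_eq_one.1 (hcard a)
  refine ⟨fun j => ((3 * e j : ℤ) : ℝ), fun a => ((3 * e (g a) + 1 : ℤ) : ℝ), ⟨?_, ?_, ?_, ?_⟩⟩
  · intro i j hij
    simp only [Int.cast_mul, Int.cast_ofNat, Int.cast_natCast] at hij
    exact he (by exact_mod_cast mul_left_cancel₀ three_ne_zero hij)
  · intro i j _
    rw [Ne, Int.dist_cast_eq_one_iff]
    omega
  · intro a a' _
    rw [Ne, Int.dist_cast_eq_one_iff]
    omega
  · intro j a
    rw [Int.dist_cast_eq_one_iff, hg, Finset.mem_singleton, ← he.eq_iff]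
    omega

theorem AffineIndependent.insert_of_notMem_affineSpan {k V P : Type*} [DivisionRing k]
    [AddCommGroup V] [Module k V] [AddTorsor V P] {s : Set P}
    (hs : AffineIndependent k ((↑) : s → P)) {x : P} (hx : x ∉ affineSpan k s) :
    AffineIndependent k ((↑) : ↥(insert x s) → P) := by
  set i : ↥(insert x s) := ⟨x, Set.mem_insert x s⟩
  have hrest : (fun y : {y // y ≠ i} => (y : P)) '' Set.univ ⊆ s := by
    rintro _ ⟨⟨⟨y, hy⟩, hyi⟩, -, rfl⟩
    exact (Set.mem_insert_iff.1 hy).resolve_left fun h => hyi (Subtype.ext h)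
  refine AffineIndependent.affineIndependent_of_notMem_span
    (p := ((↑) : ↥(insert x s) → P)) (i := i) ?_ ?_
  · refine AffineIndependent.of_set_of_injective (hs.mono ?_) ?_
    · simpa [Set.image_univ] using hrest
    · intro y z h
      exact Subtype.ext (Subtype.ext h)
  · refine fun h => hx (affineSpan_mono k ?_ h)
    rintro _ ⟨y, hy, rfl⟩
    exact hrest ⟨⟨y, hy⟩, trivial, rfl⟩

theorem affineSpan_ne_top_of_card_le_finrank {k V P : Type*} [DivisionRing k] [AddCommGroup V]
    [Module k V] [AddTorsor V P] {S : Finset P} (h : S.card ≤ finrank k V) :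
    affineSpan k (S : Set P) ≠ ⊤ := by
  classical
  intro htop
  have hpos :=
    (Finset.coe_nonempty.1 (AffineSubspace.nonempty_of_affineSpan_eq_top k V P htop)).card_pos
  have := finrank_vectorSpan_image_finset_le k id S (n := S.card - 1) (by omega)
  rw [Finset.image_id, AffineSubspace.vectorSpan_eq_top_of_affineSpan_eq_top k V P htop,
    finrank_top] at this
  omega

theorem AffineIndependent.exists_sphere_forall_cospherical_insert {V P : Type*}
    [NormedAddCommGroup V] [InnerProductSpace ℝ V] [MetricSpace P] [NormedAddTorsor V P]
    [FiniteDimensional ℝ V] {S : Finset P}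
    (hS : AffineIndependent ℝ ((↑) : S → P)) (hcard : S.card = finrank ℝ V + 1) :
    ∃ s : Sphere P, (S : Set P) ⊆ s ∧ ∀ x, Cospherical (insert x (S : Set P)) → x ∈ s := by
  have : Nonempty S := Finset.nonempty_coe_sort.2 (Finset.card_pos.1 (by omega))
  obtain ⟨s, ⟨-, hs⟩, huniq⟩ := hS.existsUnique_dist_eq
  have hspan : affineSpan ℝ (Set.range ((↑) : S → P)) = ⊤ := by
    rw [hS.affineSpan_eq_top_iff_card_eq_finrank_add_one, Fintype.card_coe, hcard]
  rw [Subtype.range_coe] at hs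
  refine ⟨s, hs, fun x ⟨c, r, hx⟩ => ?_⟩
  have : (⟨c, r⟩ : Sphere P) = s :=
    huniq _ ⟨hspan ▸ AffineSubspace.mem_top ℝ V c,
      fun y hy => hx y (Set.mem_insert_of_mem x (by simpa using hy))⟩
  exact this ▸ hx x (Set.mem_insert x _)

section GeneralPosition

variable {E : Type*} [NormedAddCommGroup E] [InnerProductSpace ℝ E]

variable (E) in
structure InSphericalGeneralPosition (P : Finset E) : Prop where
  affineIndependent : ∀ S ⊆ P, S.card ≤ finrank ℝ E + 1 → AffineIndependent ℝ ((↑) : S → E)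
  not_cospherical : ∀ T ⊆ P, T.card = finrank ℝ E + 2 → ¬ Cospherical (T : Set E)

theorem inSphericalGeneralPosition_empty : InSphericalGeneralPosition E ∅ :=
  ⟨fun S hS _ => by
      obtain rfl := Finset.subset_empty.1 hS
      exact affineIndependent_of_subsingleton ℝ _,
    fun T hT hcard => by simp [Finset.subset_empty.1 hT] at hcard⟩

theorem InSphericalGeneralPosition.insert_of_notMem_affineSpan [DecidableEq E] {P : Finset E}
    (hP : InSphericalGeneralPosition E P) {x : E}
    (hspan : ∀ S ⊆ P, S.card ≤ finrank ℝ E → x ∉ affineSpan ℝ (S : Set E))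
    (hsphere : ∀ T ⊆ P, T.card = finrank ℝ E + 1 → ¬ Cospherical (insert x (T : Set E))) :
    InSphericalGeneralPosition E (insert x P) := by
  have erase_subset : ∀ {S : Finset E}, S ⊆ insert x P → S.erase x ⊆ P := fun hS y hy =>
    (Finset.mem_insert.1 (hS (Finset.mem_of_mem_erase hy))).resolve_left
      (Finset.ne_of_mem_erase hy)
  refine ⟨fun S hS hcard => ?_, fun T hT hcard => ?_⟩
  · by_cases hx : x ∈ S
    · have hcard' : (S.erase x).card ≤ finrank ℝ E := by
        rw [Finset.card_erase_of_mem hx]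
        omega
      have := (hP.affineIndependent _ (erase_subset hS) (by omega)).insert_of_notMem_affineSpan
        (hspan _ (erase_subset hS) hcard')
      rwa [← Finset.coe_insert, Finset.insert_erase hx] at this
    · exact hP.affineIndependent S ((Finset.subset_insert_iff_of_notMem hx).1 hS) hcard
  · by_cases hx : x ∈ T
    · have := hsphere _ (erase_subset hT) (by rw [Finset.card_erase_of_mem hx]; omega)
      rwa [← Finset.coe_insert, Finset.insert_erase hx] at this
    · exact hP.not_cospherical T ((Finset.subset_insert_iff_of_notMem hx).1 hT) hcard

theorem InSphericalGeneralPosition.exists_insert [FiniteDimensional ℝ E] [Nontrivial E]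
    [DecidableEq E] {P : Finset E} (hP : InSphericalGeneralPosition E P) :
    ∃ x ∉ P, InSphericalGeneralPosition E (insert x P) := by
  let : MeasurableSpace E := borel E
  have : BorelSpace E := ⟨rfl⟩
  set small := {S : Finset E | S ⊆ P ∧ S.card ≤ finrank ℝ E}
  set big := {T : Finset E | T ⊆ P ∧ T.card = finrank ℝ E + 1}
  have hcount : ∀ Q : Set (Finset E), (∀ S ∈ Q, S ⊆ P) → Q.Countable := fun Q hQ =>
    (P.powerset.finite_toSet.subset fun S hS => Finset.mem_powerset.2 (hQ S hS)).countable
  have hnull : (Measure.addHaar : Measure E) ((⋃ S ∈ small, (affineSpan ℝ (S : Set E) : Set E)) ∪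
      ⋃ T ∈ big, {x | Cospherical (insert x (T : Set E))}) = 0 := by
    refine measure_union_null
      ((measure_biUnion_null_iff (hcount _ fun S hS => hS.1)).2 fun S hS => ?_)
      ((measure_biUnion_null_iff (hcount _ fun T hT => hT.1)).2 fun T hT => ?_)
    · exact Measure.addHaar_affineSubspace _ _ (affineSpan_ne_top_of_card_le_finrank hS.2)
    · obtain ⟨s, -, hs⟩ :=
        (hP.affineIndependent T hT.1 hT.2.le).exists_sphere_forall_cospherical_insert hT.2
      exact measure_mono_null hs (Measure.addHaar_sphere _ _ _)
  obtain ⟨x, hx⟩ := (measure_eq_zero_iff_ae_notMem.1 hnull).exists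
  simp only [Set.mem_union, Set.mem_iUnion, not_or, not_exists] at hx
  have hspan : ∀ S ⊆ P, S.card ≤ finrank ℝ E → x ∉ affineSpan ℝ (S : Set E) :=
    fun S hS hcard => hx.1 S ⟨hS, hcard⟩
  have hxP : x ∉ P := fun hxP => hspan {x} (by simpa using hxP)
    (by rw [Finset.card_singleton]; exact Module.finrank_pos) (mem_affineSpan ℝ (by simp))
  exact ⟨x, hxP, hP.insert_of_notMem_affineSpan hspan fun T hT hcard => hx.2 T ⟨hT, hcard⟩⟩

theorem exists_inSphericalGeneralPosition_card [FiniteDimensional ℝ E] [Nontrivial E] (n : ℕ) :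
    ∃ P : Finset E, P.card = n ∧ InSphericalGeneralPosition E P := by
  classical
  induction n with
  | zero => exact ⟨∅, rfl, inSphericalGeneralPosition_empty⟩
  | succ n ih =>
    obtain ⟨P, rfl, hP⟩ := ih
    obtain ⟨x, hx, hxP⟩ := hP.exists_insert
    exact ⟨insert x P, Finset.card_insert_of_notMem hx, hxP⟩

theorem InSphericalGeneralPosition.exists_dist_eq_iff_mem [FiniteDimensional ℝ E]
    {P S : Finset E} (hP : InSphericalGeneralPosition E P) (hSP : S ⊆ P)
    (hS : S.card = finrank ℝ E + 1) :
    ∃ (c : E) (r : ℝ), ∀ y ∈ P, dist y c = r ↔ y ∈ S := by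
  classical
  obtain ⟨s, hSs, -⟩ :=
    (hP.affineIndependent S hSP hS.le).exists_sphere_forall_cospherical_insert hS
  refine ⟨s.center, s.radius, fun y hy => ⟨fun hys => by_contra fun hyS => ?_, fun hyS => hSs hyS⟩⟩
  refine hP.not_cospherical (insert y S) (Finset.insert_subset hy hSP)
    (by rw [Finset.card_insert_of_notMem hyS, hS]) ⟨s.center, s.radius, fun z hz => ?_⟩
  rcases Finset.mem_insert.1 hz with rfl | hz
  · exact hys
  · exact hSs hz

end GeneralPosition

theorem WithLp.dist_toLp_prod_eq_one_iff {E F : Type*}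
    [SeminormedAddCommGroup E] [SeminormedAddCommGroup F] (x y : E) (s t : F) :
    dist (toLp 2 (x, s)) (toLp 2 (y, t)) = 1 ↔ dist x y ^ 2 + dist s t ^ 2 = 1 := by
  rw [prod_dist_eq_of_L2, Real.sqrt_eq_one, toLp_fst, toLp_fst, toLp_snd, toLp_snd]

theorem exists_pos_forall_norm_smul_le {ι E : Type*} [Finite ι] [NormedAddCommGroup E]
    [NormedSpace ℝ E] (v : ι → E) {ε : ℝ} (hε : 0 < ε) :
    ∃ δ : ℝ, 0 < δ ∧ ∀ i, ‖δ • v i‖ ≤ ε := by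
  obtain ⟨M, hM⟩ := Finite.exists_le fun i => ‖v i‖
  have hM0 : 0 < max M 0 + 1 := by positivity
  refine ⟨ε / (max M 0 + 1), by positivity, fun i => ?_⟩
  rw [norm_smul, Real.norm_of_nonneg (by positivity), div_mul_eq_mul_div, div_le_iff₀ hM0]
  gcongr
  linarith [hM i, le_max_left M 0]

section Lift

variable {A B E : Type*} [NormedAddCommGroup E]

theorem isUnitDistRealization_toLp_prod (ψ : A → Finset B) (hne : ∀ a, (ψ a).Nonempty)
    {p : B → E} (hp : Injective p) {c : A → E} {r : A → ℝ}
    (hpc : ∀ j a, dist (p j) (c a) = r a ↔ j ∈ ψ a)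
    (hp_le : ∀ j, ‖p j‖ ≤ 1 / 4) (hc_le : ∀ a, ‖c a‖ ≤ 1 / 4) :
    IsUnitDistRealization ψ (fun j => WithLp.toLp 2 (p j, (0 : ℝ)))
      (fun a => WithLp.toLp 2 (c a, √(1 - r a ^ 2))) := by
  have hr : ∀ a, 0 ≤ r a ∧ r a ≤ 1 / 2 := by
    intro a
    obtain ⟨j, hj⟩ := hne a
    rw [← (hpc j a).2 hj]
    exact ⟨dist_nonneg, (dist_le_norm_add_norm _ _).trans (by linarith [hp_le j, hc_le a])⟩
  have hh_sq : ∀ a, √(1 - r a ^ 2) ^ 2 = 1 - r a ^ 2 := fun a =>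
    Real.sq_sqrt (by nlinarith [hr a])
  have hh : ∀ a, 1 / 2 ≤ √(1 - r a ^ 2) ∧ √(1 - r a ^ 2) ≤ 1 := fun a =>
    ⟨Real.le_sqrt_of_sq_le (by nlinarith [hr a]), Real.sqrt_le_one.2 (by nlinarith [hr a])⟩
  have hdist : ∀ {x y : E}, ‖x‖ ≤ 1 / 4 → ‖y‖ ≤ 1 / 4 → dist x y ^ 2 ≤ 1 / 4 := by
    intro x y hx hy
    have := (dist_le_norm_add_norm x y).trans (by linarith : ‖x‖ + ‖y‖ ≤ 1 / 2)
    nlinarith [dist_nonneg (x := x) (y := y)]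
  refine ⟨fun i j hij => hp (by simpa using hij), fun i j _ => ?_, fun a a' _ => ?_,
    fun j a => ?_⟩
  · rw [Ne, WithLp.dist_toLp_prod_eq_one_iff, dist_self]
    nlinarith [hdist (hp_le i) (hp_le j)]
  · rw [Ne, WithLp.dist_toLp_prod_eq_one_iff, Real.dist_eq, sq_abs]
    nlinarith [hdist (hc_le a) (hc_le a'), hh a, hh a']
  · rw [WithLp.dist_toLp_prod_eq_one_iff, Real.dist_eq, sq_abs, zero_sub, neg_sq, hh_sq,
      ← hpc, ← sq_eq_sq₀ dist_nonneg (hr a).1]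
    constructor <;> intro h <;> linarith

theorem exists_isUnitDistRealization_prod [InnerProductSpace ℝ E] [FiniteDimensional ℝ E]
    [Nontrivial E] [Finite A] [Finite B] (ψ : A → Finset B)
    (hcard : ∀ a, (ψ a).card = finrank ℝ E + 1) :
    ∃ (fB : B → WithLp 2 (E × ℝ)) (fA : A → WithLp 2 (E × ℝ)), IsUnitDistRealization ψ fB fA := by
  classical
  obtain ⟨P, hPcard, hP⟩ := exists_inSphericalGeneralPosition_card (E := E) (Nat.card B)
  obtain ⟨e⟩ : Nonempty (B ≃ P) := Finite.card_eq.1 (by simp [hPcard])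
  set p : B ↪ E := e.toEmbedding.trans (Embedding.subtype _)
  have hcircum : ∀ a, ∃ (c : E) (r : ℝ), ∀ j, dist (p j) c = r ↔ j ∈ ψ a := by
    intro a
    obtain ⟨c, r, h⟩ := hP.exists_dist_eq_iff_mem (S := (ψ a).map p)
      (fun y hy => by obtain ⟨j, -, rfl⟩ := Finset.mem_map.1 hy; exact (e j).2)
      (by rw [Finset.card_map, hcard])
    exact ⟨c, r, fun j => (h (p j) (e j).2).trans (Finset.mem_map' p)⟩
  choose c r hcr using hcircum
  obtain ⟨δ, hδ, hsmall⟩ :=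
    exists_pos_forall_norm_smul_le (Sum.elim p c) (by norm_num : (0 : ℝ) < 1 / 4)
  refine ⟨_, _, isUnitDistRealization_toLp_prod ψ
    (fun a => Finset.card_pos.1 (by rw [hcard]; exact Nat.succ_pos _))
    (p := fun j => δ • p j) ((smul_right_injective E hδ.ne').comp p.injective)
    (c := fun a => δ • c a) (r := fun a => δ * r a) (fun j a => ?_)
    (fun j => hsmall (.inl j)) (fun a => hsmall (.inr a))⟩
  rw [dist_smul₀, Real.norm_of_nonneg hδ.le, mul_right_inj' hδ.ne', hcr]

end Lift

theorem exists_isUnitDistEmbedding_bipartiteOf {A B : Type*} [Finite A] [Finite B] {d : ℕ}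
    (hd : 1 ≤ d) (ψ : A → Finset B) (hψ : Injective ψ) (hcard : ∀ a, (ψ a).card = d) :
    ∃ f : B ⊕ A → EuclideanSpace ℝ (Fin d), IsUnitDistEmbedding (SimpleGraph.bipartiteOf ψ) f := by
  have hne : ∀ a, (ψ a).Nonempty := fun a => Finset.card_pos.1 (by rw [hcard]; omega)
  obtain ⟨e, rfl⟩ : ∃ e, d = e + 1 := ⟨d - 1, by omega⟩
  rcases e with _ | e
  · obtain ⟨fB, fA, h⟩ := exists_isUnitDistRealization_real ψ hcard
    exact h.exists_isUnitDistEmbedding_euclideanSpace hψ hne (finrank_self ℝ)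
  · obtain ⟨fB, fA, h⟩ :=
      exists_isUnitDistRealization_prod (E := EuclideanSpace ℝ (Fin (e + 1))) ψ
        (by simpa using hcard)
    refine h.exists_isUnitDistEmbedding_euclideanSpace hψ hne ?_
    rw [(WithLp.linearEquiv 2 ℝ _).finrank_eq, finrank_prod, finrank_euclideanSpace_fin,
      finrank_self]

theorem descFactorial_choose_le_card_isUnitDistEmbedding (n d b : ℕ) (hd : 1 ≤ d) (hbn : b ≤ n) :
    (b.choose d).descFactorial (n - b) ≤
      Nat.card {G : SimpleGraph (Fin n) |
        ∃ f : Fin n → EuclideanSpace ℝ (Fin d), IsUnitDistEmbedding G f} := by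
  let e : Fin b ⊕ Fin (n - b) ≃ Fin n := finSumFinEquiv.trans (finCongr (by omega))
  let graph (Ψ : Fin (n - b) ↪ {S : Finset (Fin b) // S.card = d}) : SimpleGraph (Fin n) :=
    (SimpleGraph.bipartiteOf fun a => (Ψ a).1).map e.toEmbedding
  have hgraph : Injective graph := fun Ψ Ψ' h =>
    DFunLike.ext _ _ fun a => Subtype.ext (congrFun
      (SimpleGraph.bipartiteOf_injective (SimpleGraph.map_injective e.toEmbedding h)) a)
  have hmem : ∀ Ψ, ∃ f : Fin n → EuclideanSpace ℝ (Fin d), IsUnitDistEmbedding (graph Ψ) f := by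
    intro Ψ
    obtain ⟨f, hf⟩ := exists_isUnitDistEmbedding_bipartiteOf hd (fun a => (Ψ a).1)
      (Subtype.val_injective.comp Ψ.injective) fun a => (Ψ a).2
    exact ⟨_, hf.map_equiv e⟩
  calc (b.choose d).descFactorial (n - b)
      = Nat.card (Fin (n - b) ↪ {S : Finset (Fin b) // S.card = d}) := by
        rw [Nat.card_eq_fintype_card, Fintype.card_embedding_eq, Fintype.card_finset_len,
          Fintype.card_fin, Fintype.card_fin]
    _ ≤ _ := Nat.card_le_card_of_injective (fun Ψ => ⟨graph Ψ, hmem Ψ⟩)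
        fun Ψ Ψ' h => hgraph (congrArg Subtype.val h)

theorem stmt_15_general (n d b : ℕ) (hd : 1 ≤ d) :
    Nat.factorial (n - b) * Nat.choose (Nat.choose b d) (n - b) ≤
      Nat.card {G : SimpleGraph (Fin n) |
        ∃ f : Fin n → EuclideanSpace ℝ (Fin d), Function.Injective f ∧
          ∀ i j : Fin n, i ≠ j → (G.Adj i j ↔ dist (f i) (f j) = 1)} := by
  rcases le_or_gt b n with hbn | hnb
  · rw [← Nat.descFactorial_eq_factorial_mul_choose]
    exact descFactorial_choose_le_card_isUnitDistEmbedding n d b hd hbn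
  · rw [Nat.sub_eq_zero_of_le hnb.le, Nat.factorial_zero, Nat.choose_zero_right, one_mul]
    have h := descFactorial_choose_le_card_isUnitDistEmbedding n d n hd le_rfl
    rwa [Nat.sub_self, Nat.descFactorial_zero] at h

/-- with `b = ⌈n / log₂ n⌉`, if `b ≥ d` and `C(b,d)` is at least the size
`n - b` of `A`, then the number of labelled faithful unit distance graphs on `n` vertices
in `ℝ^d` is at least `|A|! · C(C(b,d), |A|)`. -/
theorem stmt_15 (n d b : ℕ) (hn : 1 ≤ n) (hd : 1 ≤ d)
    (hb : b = ⌈(n : ℝ) / Real.logb 2 n⌉₊) (hbd : d ≤ b) (hA : n - b ≤ Nat.choose b d) :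
    Nat.factorial (n - b) * Nat.choose (Nat.choose b d) (n - b) ≤
      Nat.card {G : SimpleGraph (Fin n) |
        ∃ f : Fin n → EuclideanSpace ℝ (Fin d), Function.Injective f ∧
          ∀ i j : Fin n, i ≠ j → (G.Adj i j ↔ dist (f i) (f j) = 1)} :=
  stmt_15_general n d b hd
end

section
/- Any finite graph that admits a proper coloring with a color classes of size exactly 1 and b color classes of size at least 2 can be realized as a unit distance graph in R^{a+2b}. -/
/-!
Give every colour class its own block of coordinates, one coordinate for a singleton class and
a plane for any other class, and place the vertices of a class at distinct points of norm
`1 / √2` in its block (the circle of that radius is infinite). Blocks of different colours are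
orthogonal, so by Pythagoras vertices of different colours are at distance
`√(1/2 + 1/2) = 1`; in particular adjacent vertices are.
-/

open Function Module

namespace PiLp

variable {ι : Type*} [DecidableEq ι] {β : ι → Type*}

theorem injective_sigma_single (p : ENNReal) [∀ i, Zero (β i)] {α : ι → Type*}
    {q : ∀ i, α i → β i} (hq : ∀ i, Injective (q i)) (hq0 : ∀ i x, q i x ≠ 0) :
    Injective fun x : Σ i, α i ↦ single p x.1 (q x.1 x.2) := by
  rintro ⟨i, x⟩ ⟨j, y⟩ h
  have hj := congrArg (· i) h
  obtain rfl : i = j := by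
    by_contra hij
    simp only [single_eq_same, single_eq_of_ne' p (Ne.symm hij)] at hj
    exact hq0 i x hj
  simp only [single_eq_same] at hj
  rw [hq i hj]

theorem dist_single_single_sq [Fintype ι] [∀ i, SeminormedAddCommGroup (β i)] {i j : ι}
    (hij : i ≠ j) (x : β i) (y : β j) :
    dist (single 2 i x) (single 2 j y) ^ 2 = ‖x‖ ^ 2 + ‖y‖ ^ 2 := by
  rw [dist_sq_eq_of_L2, Fintype.sum_eq_add i j hij]
  · simp [single_eq_of_ne' 2 hij, single_eq_of_ne' 2 hij.symm]
  · rintro k ⟨hki, hkj⟩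
    simp [single_eq_of_ne 2 hki, single_eq_of_ne 2 hkj]

end PiLp

theorem EuclideanSpace.exists_injective_norm_eq_fin_two (α : Type*) [Countable α] {r : ℝ}
    (hr : 0 < r) : ∃ q : α → EuclideanSpace ℝ (Fin 2), Injective q ∧ ∀ x, ‖q x‖ = r := by
  obtain ⟨e, he⟩ := Countable.exists_injective_nat α
  let t : α → ℝ := fun x ↦ r / (e x + 1)
  have ht : ∀ x, t x ^ 2 ≤ r ^ 2 := fun x ↦
    pow_le_pow_left₀ (by positivity) (div_le_self hr.le (by simp)) 2
  refine ⟨fun x ↦ !₂[t x, √(r ^ 2 - t x ^ 2)], fun x y hxy ↦ he ?_, fun x ↦ ?_⟩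
  · have : r / (e x + 1) = r / (e y + 1) := congrArg (· 0) hxy
    rw [div_eq_mul_inv, div_eq_mul_inv, mul_right_inj' hr.ne', inv_inj] at this
    exact_mod_cast add_right_cancel this
  · rw [EuclideanSpace.norm_eq, Fin.sum_univ_two]
    simp [Real.sq_sqrt (sub_nonneg.2 (ht x)), hr.le]

theorem exists_injective_unit_distance_piLp {V ι : Type*} [Fintype ι] [DecidableEq ι]
    {E : ι → Type*} [∀ i, NormedAddCommGroup (E i)] (G : SimpleGraph V) (C : V → ι)
    (hC : ∀ u v, G.Adj u v → C u ≠ C v)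
    (hE : ∀ i, ∃ q : {v // C v = i} → E i, Injective q ∧ ∀ w, ‖q w‖ = (√2)⁻¹) :
    ∃ f : V → PiLp 2 E, Injective f ∧ ∀ u v, G.Adj u v → dist (f u) (f v) = 1 := by
  choose q hq_inj hq_norm using hE
  have hq0 : ∀ i w, q i w ≠ 0 := fun i w ↦ norm_ne_zero_iff.1 (by rw [hq_norm]; positivity)
  refine ⟨fun v ↦ PiLp.single 2 (C v) (q (C v) ⟨v, rfl⟩),
    (PiLp.injective_sigma_single 2 hq_inj hq0).comp (Equiv.sigmaFiberEquiv C).symm.injective,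
    fun u v huv ↦ ?_⟩
  have : dist (PiLp.single 2 (C u) (q _ ⟨u, rfl⟩))
      (PiLp.single 2 (C v) (q _ ⟨v, rfl⟩)) ^ 2 = 1 := by
    rw [PiLp.dist_single_single_sq (hC u v huv), hq_norm, hq_norm]
    norm_num
  exact (pow_eq_one_iff_of_nonneg dist_nonneg two_ne_zero).1 this

theorem exists_injective_unit_distance_euclideanSpace {V ι : Type*} [Fintype ι]
    [DecidableEq ι] (G : SimpleGraph V) (C : V → ι) (hC : ∀ u v, G.Adj u v → C u ≠ C v)
    (d : ι → ℕ)
    (hd : ∀ i, ∃ q : {v // C v = i} → EuclideanSpace ℝ (Fin (d i)),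
      Injective q ∧ ∀ w, ‖q w‖ = (√2)⁻¹) :
    ∃ f : V → EuclideanSpace ℝ (Fin (∑ i, d i)), Injective f ∧
      ∀ u v, G.Adj u v → dist (f u) (f v) = 1 := by
  let F := PiLp 2 fun i ↦ EuclideanSpace ℝ (Fin (d i))
  have hdim : finrank ℝ F = ∑ i, d i := by
    simp [F, (WithLp.linearEquiv 2 ℝ _).finrank_eq, Module.finrank_pi_fintype]
  obtain ⟨f, hf_inj, hf_dist⟩ := exists_injective_unit_distance_piLp G C hC hd
  let e := ((stdOrthonormalBasis ℝ F).reindex (finCongr hdim)).repr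
  exact ⟨e ∘ f, e.injective.comp hf_inj, fun u v huv ↦ by simp [hf_dist u v huv]⟩

theorem stmt_17_general (a b : ℕ) (V : Type) [Fintype V] (G : SimpleGraph V)
    (C : V → Fin (a + b))
    (hproper : ∀ u v, G.Adj u v → C u ≠ C v)
    (hsingle : ∀ i : Fin (a + b), i.val < a → Nat.card {v : V // C v = i} = 1) :
    ∃ f : V → EuclideanSpace ℝ (Fin (a + 2 * b)), Function.Injective f ∧
      ∀ u v, G.Adj u v → dist (f u) (f v) = 1 := by
  let d : Fin (a + b) → ℕ := fun i ↦ if i.val < a then 1 else 2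
  have hd : ∀ i, ∃ q : {v // C v = i} → EuclideanSpace ℝ (Fin (d i)),
      Injective q ∧ ∀ w, ‖q w‖ = (√2)⁻¹ := by
    intro i
    by_cases hi : i.val < a
    · rw [show d i = 1 from if_pos hi]
      have : Subsingleton {v // C v = i} := (Nat.card_eq_one_iff_unique.1 (hsingle i hi)).1
      exact ⟨fun _ ↦ EuclideanSpace.single 0 (√2)⁻¹, injective_of_subsingleton _, by simp⟩
    · rw [show d i = 2 from if_neg hi]
      exact EuclideanSpace.exists_injective_norm_eq_fin_two _ (by positivity)
  have hsum : ∑ i, d i = a + 2 * b := by simp [d, Fin.sum_univ_add, mul_comm]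
  rw [← hsum]
  exact exists_injective_unit_distance_euclideanSpace G C hproper d hd

/-- any finite graph admitting a proper coloring with `a` color classes of
size exactly `1` and `b` color classes of size at least `2` can be realized as a unit
distance graph in `ℝ^{a+2b}`. -/
theorem stmt_17 (a b : ℕ) (V : Type) [Fintype V] (G : SimpleGraph V)
    (C : V → Fin (a + b))
    (hproper : ∀ u v, G.Adj u v → C u ≠ C v)
    (hsingle : ∀ i : Fin (a + b), i.val < a → Nat.card {v : V // C v = i} = 1)
    (hbig : ∀ i : Fin (a + b), a ≤ i.val → 2 ≤ Nat.card {v : V // C v = i}) :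
    ∃ f : V → EuclideanSpace ℝ (Fin (a + 2 * b)), Function.Injective f ∧
      ∀ u v, G.Adj u v → dist (f u) (f v) = 1 :=
  stmt_17_general a b V G C hproper hsingle
end

section
/- f_D(s) ≥ ⌈s/2⌉ - 1 for all s ≥ 2: the graph G on s vertices consisting of a clique on ⌈s/2⌉ vertices together with ⌊s/2⌋ isolated vertices has the property that for d < ⌈s/2⌉ - 1, neither G nor its complement can be realized as a unit distance graph in R^d. -/
/-!
Points pairwise at unit distance form a regular simplex: their differences from one of them have
Gram matrix `(I + J) / 2`, which is positive definite, so they are affinely independent and at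
most `d + 1` of them fit in `ℝ^d`. A unit distance realization in `ℝ^d` therefore forces a graph
to be `K_{d+2}`-free, whereas the clique plus isolated vertices contains `K_{⌈s/2⌉}` and its
complement contains `K_{⌊s/2⌋+1}` (the isolated vertices together with one clique vertex).
-/

/-- The graph on `s` vertices consisting of a clique on the first `⌈s/2⌉` vertices together
with `⌊s/2⌋` isolated vertices. -/
def cliqueHalf (s : ℕ) : SimpleGraph (Fin s) :=
  SimpleGraph.fromRel (fun i j => i.val < (s + 1) / 2 ∧ j.val < (s + 1) / 2)

open Matrix Module

section UnitSimplex

variable {E ι : Type*} [NormedAddCommGroup E] [InnerProductSpace ℝ E] {p : ι → E}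

theorem gram_sub_eq_of_pairwise_dist_eq_one [DecidableEq ι]
    (hp : Pairwise fun i j ↦ dist (p i) (p j) = 1) (i₀ : ι) :
    gram ℝ (fun i : {i // i ≠ i₀} ↦ p i - p i₀) = (2⁻¹ : ℝ) • (1 + vecMulVec 1 1) := by
  have hnorm (i : {i // i ≠ i₀}) : ‖p i - p i₀‖ = 1 := by
    rw [← dist_eq_norm]; exact hp i.2
  ext i j
  have hsub : ‖(p i - p i₀) - (p j - p i₀)‖ ^ 2 = if i = j then 0 else 1 := by
    split_ifs with hij
    · simp [hij]
    · rw [sub_sub_sub_cancel_right, ← dist_eq_norm, hp (Subtype.coe_ne_coe.mpr hij), one_pow]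
  rw [norm_sub_sq_real, hnorm, hnorm] at hsub
  simp only [gram_apply, Matrix.smul_apply, Matrix.add_apply, one_apply, vecMulVec_apply,
    Pi.one_apply, smul_eq_mul, mul_one]
  split_ifs at hsub ⊢ <;> linarith

theorem affineIndependent_of_pairwise_dist_eq_one [Fintype ι]
    (hp : Pairwise fun i j ↦ dist (p i) (p j) = 1) : AffineIndependent ℝ p := by
  classical
  rcases isEmpty_or_nonempty ι with _ | ⟨⟨i₀⟩⟩
  · exact affineIndependent_of_subsingleton ℝ p
  rw [affineIndependent_iff_linearIndependent_vsub ℝ p i₀]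
  apply linearIndependent_of_posDef_gram
  simp only [vsub_eq_sub]
  rw [gram_sub_eq_of_pairwise_dist_eq_one hp i₀]
  have hJ : (vecMulVec 1 1 : Matrix {i // i ≠ i₀} {i // i ≠ i₀} ℝ).PosSemidef := by
    simpa using posSemidef_vecMulVec_self_star (1 : {i // i ≠ i₀} → ℝ)
  exact (PosDef.one.add_posSemidef hJ).smul (by norm_num)

theorem card_le_finrank_succ_of_pairwise_dist_eq_one [Fintype ι] [FiniteDimensional ℝ E]
    (hp : Pairwise fun i j ↦ dist (p i) (p j) = 1) : Fintype.card ι ≤ finrank ℝ E + 1 :=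
  (affineIndependent_of_pairwise_dist_eq_one hp).card_le_finrank_succ.trans
    (Nat.add_le_add_right (Submodule.finrank_le _) 1)

end UnitSimplex

section Graph

variable {V : Type*} {G : SimpleGraph V}

theorem cliqueFree_of_adj_dist_eq_one {E : Type*} [NormedAddCommGroup E] [InnerProductSpace ℝ E]
    [FiniteDimensional ℝ E] (f : V → E) (hf : ∀ u v, G.Adj u v → dist (f u) (f v) = 1) :
    G.CliqueFree (finrank ℝ E + 2) := by
  intro t ht
  have := card_le_finrank_succ_of_pairwise_dist_eq_one (p := fun v : t ↦ f v)
    fun u v huv ↦ hf u v (ht.isClique u.2 v.2 (Subtype.coe_ne_coe.mpr huv))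
  rw [Fintype.card_coe, ht.card_eq] at this
  omega

theorem not_cliqueFree_of_pairwise_adj {n : ℕ} (φ : Fin n → V)
    (hφ : Pairwise fun i j ↦ G.Adj (φ i) (φ j)) :
    ¬G.CliqueFree n := fun hG ↦ by
  have hinj : φ.Injective := fun i j hij ↦ by_contra fun hne ↦ (hφ hne).ne hij
  exact hG _ (by simpa using SimpleGraph.isNClique_map_copy_top ⟨⟨φ, fun h ↦ hφ h⟩, hinj⟩)

end Graph

theorem not_cliqueFree_cliqueHalf (s : ℕ) : ¬(cliqueHalf s).CliqueFree ((s + 1) / 2) :=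
  not_cliqueFree_of_pairwise_adj (Fin.castLE (by omega)) fun i j hij ↦ by
    simp [cliqueHalf, Fin.castLE_inj, hij]

theorem not_cliqueFree_compl_cliqueHalf {s : ℕ} (hs : 1 ≤ s) :
    ¬(cliqueHalf s)ᶜ.CliqueFree (s / 2 + 1) :=
  not_cliqueFree_of_pairwise_adj (fun k ↦ ⟨(s + 1) / 2 - 1 + k, by omega⟩)
    fun i j hij ↦ by
      have : i.val ≠ j.val := Fin.val_ne_of_ne hij
      simp only [cliqueHalf, SimpleGraph.compl_adj, ne_eq, Fin.mk.injEq, Nat.add_left_cancel_iff,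
        SimpleGraph.fromRel_adj, not_and, not_or, not_lt]
      omega

theorem stmt_18_general (s d : ℕ) (hd : d < (s + 1) / 2 - 1) :
    (¬ ∃ f : Fin s → EuclideanSpace ℝ (Fin d), Function.Injective f ∧
        ∀ u v, (cliqueHalf s).Adj u v → dist (f u) (f v) = 1) ∧
    (¬ ∃ f : Fin s → EuclideanSpace ℝ (Fin d), Function.Injective f ∧
        ∀ u v, (cliqueHalf s)ᶜ.Adj u v → dist (f u) (f v) = 1) := by
  constructor
  · rintro ⟨f, -, hf⟩
    refine not_cliqueFree_cliqueHalf s ((cliqueFree_of_adj_dist_eq_one f hf).mono ?_)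
    rw [finrank_euclideanSpace_fin]
    omega
  · rintro ⟨f, -, hf⟩
    refine not_cliqueFree_compl_cliqueHalf (by omega)
      ((cliqueFree_of_adj_dist_eq_one f hf).mono ?_)
    rw [finrank_euclideanSpace_fin]
    omega

/-- `f_D(s) ≥ ⌈s/2⌉ - 1` for `s ≥ 2`: if `d < ⌈s/2⌉ - 1` then neither the
graph consisting of a clique on `⌈s/2⌉` vertices plus `⌊s/2⌋` isolated vertices, nor its
complement, is realizable as a unit distance graph in `ℝ^d`. -/
theorem stmt_18 (s d : ℕ) (hs : 2 ≤ s) (hd : d < (s + 1) / 2 - 1) :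
    (¬ ∃ f : Fin s → EuclideanSpace ℝ (Fin d), Function.Injective f ∧
        ∀ u v, (cliqueHalf s).Adj u v → dist (f u) (f v) = 1) ∧
    (¬ ∃ f : Fin s → EuclideanSpace ℝ (Fin d), Function.Injective f ∧
        ∀ u v, (cliqueHalf s)ᶜ.Adj u v → dist (f u) (f v) = 1) :=
  stmt_18_general s d hd
end

section
/- Let B = {x_1,...,x_m} ⊂ R^d be points lying on a sphere, and let H_1,...,H_n ⊆ {1,...,m} with |H_1| ≤ |H_2| ≤ ... ≤ |H_n|. Say (B, H) is realizable on a k-dimensional sphere S^k if there exist distinct points x_1,...,x_m on S^k such that for every l ≤ n and every i ∉ H_l, the point x_i does not lie in the affine hull of {x_j : j ∈ H_l}. If (B, H) is not realizable on S^k, then Σ_{i=1}^{n} |H_i| ≥ C(k+3, 2) - 3. -/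
/-- `(B, H)` (with `B` of size `m` and conditions `H_1,…,H_n`) is realizable on a
`k`-dimensional sphere: there are distinct points `x_1,…,x_m` on a `k`-dimensional sphere
(the unit sphere of `ℝ^{k+1}`) such that for every `l` and every `i ∉ H_l`, the point `x_i`
does not lie in the affine hull of `{x_j : j ∈ H_l}`. -/
def RealizableOnSphere (m n k : ℕ) (H : Fin n → Finset (Fin m)) : Prop :=
  ∃ x : Fin m → EuclideanSpace ℝ (Fin (k + 1)),
    Function.Injective x ∧
    (∀ i, x i ∈ Metric.sphere (0 : EuclideanSpace ℝ (Fin (k + 1))) 1) ∧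
    ∀ (l : Fin n) (i : Fin m), i ∉ H l →
      x i ∉ affineSpan ℝ (x '' ↑(H l))

/-!
If every `H_l` has at most `k + 1` elements, any `m` points of `S^k` in general position
(no `k + 2` of them affinely dependent) realize `H`. Such points exist on the inverse stereographic
image of the moment curve, which meets every hyperplane in finitely many points, since
`⟪u, γ t⟫ = a` clears to a nonzero polynomial equation in `t`.

Otherwise the largest set `H_n` has at least `k + 2` elements, and since
`C(k+3,2) = C(k+2,2) + (k+2)`, the remaining sets fit the budget of `S^(k-1)`. Realize them there
by induction and lift to `S^k`: shrink by `3/5` and put the points of `H_n` at height `4/5`, all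
others at height `-4/5`. Dropping the height is an affine map sending the lifted points back, so
the old non-incidences survive, and the height separates `H_n` from the other points.
-/

open Finset Polynomial

section GeneralPosition
variable {k V P : Type*} [Field k] [AddCommGroup V] [Module k V] [AddTorsor V P]

theorem mem_affineSpan_insert_exchange {s : Set P} {p q : P}
    (hq : q ∈ affineSpan k (insert p s)) (hqs : q ∉ affineSpan k s) :
    p ∈ affineSpan k (insert q s) := by
  rcases s.eq_empty_or_nonempty with rfl | ⟨p₁, hp₁⟩
  · rw [insert_empty_eq, AffineSubspace.mem_affineSpan_singleton] at hq
    exact hq ▸ mem_affineSpan k (Set.mem_insert q ∅)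
  rw [← affineSpan_insert_affineSpan,
    AffineSubspace.mem_affineSpan_insert_iff (mem_affineSpan k hp₁)] at hq
  obtain ⟨r, p₀, hp₀, rfl⟩ := hq
  have hr : r ≠ 0 := by
    rintro rfl
    exact hqs (by simpa using hp₀)
  rw [← affineSpan_insert_affineSpan, AffineSubspace.mem_affineSpan_insert_iff hp₀]
  refine ⟨r⁻¹, p₁, mem_affineSpan k hp₁, ?_⟩
  rw [vadd_vsub, smul_smul, inv_mul_cancel₀ hr, one_smul, vsub_vadd]

variable (k) in
def AffineGeneralPosition (K : ℕ) (S : Finset P) : Prop :=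
  ∀ T ⊆ S, #T ≤ K → ∀ p ∈ S, p ∉ T → p ∉ affineSpan k (T : Set P)

theorem AffineGeneralPosition.insert_of_forall_notMem_affineSpan [DecidableEq P] {K : ℕ}
    {S : Finset P} {p : P}
    (hS : AffineGeneralPosition k K S)
    (hp : ∀ T ⊆ S, #T ≤ K → p ∉ affineSpan k (T : Set P)) :
    AffineGeneralPosition k K (insert p S) := by
  intro T hT hTK q hq hqT hqT_span
  by_cases hpT : p ∈ T
  · have hqS : q ∈ S := (mem_insert.1 hq).resolve_left (by rintro rfl; exact hqT hpT)
    have hqT' : q ∉ T.erase p := fun h => hqT (mem_of_mem_erase h)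
    have hT'S : T.erase p ⊆ S := fun x hx =>
      (mem_insert.1 (hT (mem_of_mem_erase hx))).resolve_left (ne_of_mem_erase hx)
    have hT'K : #(T.erase p) ≤ K := card_erase_le.trans hTK
    rw [← insert_erase hpT, coe_insert] at hqT_span
    by_cases hqT'_span : q ∈ affineSpan k ((T.erase p : Finset P) : Set P)
    · exact hS _ hT'S hT'K q hqS hqT' hqT'_span
    refine hp (insert q (T.erase p)) (insert_subset hqS hT'S) ?_ ?_
    · rwa [card_insert_of_notMem hqT', card_erase_add_one hpT]
    · rw [coe_insert]
      exact mem_affineSpan_insert_exchange hqT_span hqT'_span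
  · have hTS : T ⊆ S := fun x hx =>
      (mem_insert.1 (hT hx)).resolve_left (by rintro rfl; exact hpT hx)
    rcases mem_insert.1 hq with rfl | hqS
    · exact hp T hTS hTK hqT_span
    · exact hS T hTS hTK q hqS hqT hqT_span

theorem Set.Infinite.exists_affineGeneralPosition_subset {C : Set P} (hC : C.Infinite) {K : ℕ}
    (hfin : ∀ T : Finset P, #T ≤ K → (C ∩ affineSpan k (T : Set P)).Finite) (m : ℕ) :
    ∃ S : Finset P, ↑S ⊆ C ∧ #S = m ∧ AffineGeneralPosition k K S := by
  classical
  induction m with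
  | zero => exact ⟨∅, by simp, rfl, by simp [AffineGeneralPosition]⟩
  | succ m ih =>
    obtain ⟨S, hSC, hSm, hS⟩ := ih
    let small := S.powerset.filter fun T => #T ≤ K
    have hbad : (⋃ T ∈ small, C ∩ affineSpan k (T : Set P)).Finite :=
      small.finite_toSet.biUnion fun T hT => hfin T (Finset.mem_filter.1 hT).2
    obtain ⟨p, ⟨hpC, hpS⟩, hpbad⟩ := ((hC.sdiff S.finite_toSet).sdiff hbad).nonempty
    refine ⟨insert p S, by simpa [Set.insert_subset_iff] using ⟨hpC, hSC⟩,
      by rw [card_insert_of_notMem hpS, hSm],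
      hS.insert_of_forall_notMem_affineSpan fun T hTS hTK hp => ?_⟩
    exact hpbad
      (Set.mem_biUnion (Finset.mem_filter.2 ⟨Finset.mem_powerset.2 hTS, hTK⟩) ⟨hpC, hp⟩)

end GeneralPosition

theorem exists_ne_zero_forall_inner_eq_of_card_le {E : Type*} [NormedAddCommGroup E]
    [InnerProductSpace ℝ E] [FiniteDimensional ℝ E] [Nontrivial E] (T : Finset E)
    (hT : #T ≤ Module.finrank ℝ E) :
    ∃ u : E, u ≠ 0 ∧ ∃ a : ℝ, ∀ z ∈ affineSpan ℝ (T : Set E), inner ℝ u z = a := by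
  classical
  rcases T.eq_empty_or_nonempty with rfl | ⟨z₀, hz₀⟩
  · obtain ⟨u, hu⟩ := exists_ne (0 : E)
    exact ⟨u, hu, 0, by simp [AffineSubspace.notMem_bot]⟩
  have hrank : Module.finrank ℝ (vectorSpan ℝ (T : Set E)) < Module.finrank ℝ E := by
    have hT₀ := T.card_pos.2 ⟨z₀, hz₀⟩
    have := finrank_vectorSpan_image_finset_le ℝ id T (n := #T - 1) (by omega)
    rw [image_id] at this
    omega
  have hne : (vectorSpan ℝ (T : Set E))ᗮ ≠ ⊥ := fun h =>
    (Submodule.orthogonal_eq_bot_iff.1 h ▸ hrank).ne (finrank_top ℝ E)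
  obtain ⟨u, hu, hu0⟩ := Submodule.ne_bot_iff _ |>.1 hne
  refine ⟨u, hu0, inner ℝ u z₀, fun z hz => ?_⟩
  have hdir : z - z₀ ∈ vectorSpan ℝ (T : Set E) := by
    rw [← direction_affineSpan]
    exact AffineSubspace.vsub_mem_direction hz (mem_affineSpan ℝ (mem_coe.2 hz₀))
  have := Submodule.inner_left_of_mem_orthogonal hdir hu
  rw [inner_sub_right] at this
  linarith

theorem EuclideanSpace.mem_sphere_zero_iff_sum_sq {ι : Type*} [Fintype ι]
    (x : EuclideanSpace ℝ ι) : x ∈ Metric.sphere 0 1 ↔ ∑ i, x i ^ 2 = 1 := by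
  rw [mem_sphere_zero_iff_norm, ← pow_eq_one_iff_of_nonneg (norm_nonneg x) two_ne_zero,
    EuclideanSpace.real_norm_sq_eq]

noncomputable section SphereMomentCurve

def momentNormSq (k : ℕ) (t : ℝ) : ℝ := ∑ j ∈ range k, t ^ (2 * (j + 1))

theorem momentNormSq_nonneg (k : ℕ) (t : ℝ) : 0 ≤ momentNormSq k t :=
  sum_nonneg fun j _ => (even_two_mul (j + 1)).pow_nonneg t

/-- The inverse stereographic projection `v ↦ (2v, ‖v‖² - 1) / (‖v‖² + 1)` of the moment curve
`v t = (t, t², …, tᵏ)`, with `momentNormSq k t = ‖v t‖²`. -/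
def sphereMomentCurve (k : ℕ) (t : ℝ) : EuclideanSpace ℝ (Fin (k + 1)) :=
  WithLp.toLp 2 (Fin.snoc (fun j : Fin k => 2 * t ^ ((j : ℕ) + 1) / (momentNormSq k t + 1))
    ((momentNormSq k t - 1) / (momentNormSq k t + 1)))

def sphereMomentPoly (k : ℕ) (u : EuclideanSpace ℝ (Fin (k + 1))) (a : ℝ) : ℝ[X] :=
  ∑ j : Fin k, C (2 * u j.castSucc) * X ^ ((j : ℕ) + 1)
    + C (u (Fin.last k) - a) * ∑ j ∈ range k, X ^ (2 * (j + 1)) - C (u (Fin.last k) + a)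

theorem eval_sphereMomentPoly (k : ℕ) (u : EuclideanSpace ℝ (Fin (k + 1))) (a t : ℝ) :
    (sphereMomentPoly k u a).eval t
      = (inner ℝ u (sphereMomentCurve k t) - a) * (momentNormSq k t + 1) := by
  have hD : momentNormSq k t + 1 ≠ 0 := by linarith [momentNormSq_nonneg k t]
  simp only [sphereMomentPoly, sphereMomentCurve, PiLp.inner_apply, Fin.sum_univ_castSucc,
    Fin.snoc_castSucc, Fin.snoc_last, eval_add, eval_sub, eval_mul, eval_C, eval_pow, eval_X,
    eval_finsetSum, RCLike.inner_apply, conj_trivial]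
  have hlin : ∑ j : Fin k, 2 * t ^ ((j : ℕ) + 1) / (momentNormSq k t + 1) * u j.castSucc
      = (∑ j : Fin k, 2 * u j.castSucc * t ^ ((j : ℕ) + 1)) / (momentNormSq k t + 1) := by
    rw [sum_div]
    exact sum_congr rfl fun j _ => by ring
  rw [hlin, ← momentNormSq]
  field_simp
  ring

theorem coeff_sphereMomentPoly (k : ℕ) (u : EuclideanSpace ℝ (Fin (k + 1))) (a : ℝ) (n : ℕ) :
    (sphereMomentPoly k u a).coeff n
      = (∑ j : Fin k, if n = (j : ℕ) + 1 then 2 * u j.castSucc else 0)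
        + (u (Fin.last k) - a) * (∑ j ∈ range k, if n = 2 * (j + 1) then 1 else 0)
        - if n = 0 then u (Fin.last k) + a else 0 := by
  simp only [sphereMomentPoly, coeff_add, coeff_sub, finsetSum_coeff, coeff_C_mul, coeff_X_pow,
    coeff_C, mul_ite, mul_one, mul_zero]

theorem sphereMomentPoly_ne_zero {k : ℕ} (hk : k ≠ 0) {u : EuclideanSpace ℝ (Fin (k + 1))}
    (hu : u ≠ 0) (a : ℝ) : sphereMomentPoly k u a ≠ 0 := by
  intro hP
  have hcoeff (n : ℕ) := (coeff_sphereMomentPoly k u a n).symm.trans (by rw [hP, coeff_zero])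
  have hsum : u (Fin.last k) + a = 0 := by
    have h := hcoeff 0
    rw [sum_eq_zero fun j _ => if_neg (by omega), sum_eq_zero fun j _ => if_neg (by omega),
      if_pos rfl] at h
    linarith
  have hdiff : u (Fin.last k) - a = 0 := by
    have h := hcoeff (2 * k)
    rw [sum_eq_zero fun j _ => if_neg (by have := j.isLt; omega),
      sum_eq_single_of_mem (k - 1) (mem_range.2 (by omega))
        fun j hj _ => if_neg (by have := mem_range.1 hj; omega),
      if_pos (by omega), if_neg (by omega)] at h
    linarith
  have hcast (i : Fin k) : u i.castSucc = 0 := by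
    have h := hcoeff ((i : ℕ) + 1)
    simp only [hdiff, Nat.add_right_cancel_iff, Fin.val_inj] at h
    simpa using h
  exact hu (by ext j; induction j using Fin.lastCases <;> simp [hcast]; linarith)

theorem finite_setOf_inner_sphereMomentCurve_eq {k : ℕ} (hk : k ≠ 0)
    {u : EuclideanSpace ℝ (Fin (k + 1))} (hu : u ≠ 0) (a : ℝ) :
    {t | inner ℝ u (sphereMomentCurve k t) = a}.Finite :=
  (finite_setOfPred_isRoot (sphereMomentPoly_ne_zero hk hu a)).subset fun t ht => by
    simp [IsRoot, eval_sphereMomentPoly, show inner ℝ u (sphereMomentCurve k t) = a from ht]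

theorem sphereMomentCurve_mem_sphere (k : ℕ) (t : ℝ) :
    sphereMomentCurve k t ∈ Metric.sphere (0 : EuclideanSpace ℝ (Fin (k + 1))) 1 := by
  have hD : momentNormSq k t + 1 ≠ 0 := by linarith [momentNormSq_nonneg k t]
  rw [EuclideanSpace.mem_sphere_zero_iff_sum_sq, Fin.sum_univ_castSucc]
  simp only [sphereMomentCurve, Fin.snoc_castSucc, Fin.snoc_last]
  have hsq : ∑ j : Fin k, (2 * t ^ ((j : ℕ) + 1) / (momentNormSq k t + 1)) ^ 2
      = 4 * momentNormSq k t / (momentNormSq k t + 1) ^ 2 := by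
    calc _ = ∑ j : Fin k, 4 * t ^ (2 * ((j : ℕ) + 1)) / (momentNormSq k t + 1) ^ 2 :=
          sum_congr rfl fun j _ => by rw [div_pow]; ring
      _ = _ := by
          rw [← sum_div, ← mul_sum, Fin.sum_univ_eq_sum_range (fun j => t ^ (2 * (j + 1))),
            momentNormSq]
  rw [hsq]
  field_simp
  ring

theorem sphereMomentCurve_injective {k : ℕ} (hk : k ≠ 0) :
    Function.Injective (sphereMomentCurve k) := by
  intro t t' h
  have hD := momentNormSq_nonneg k t
  have hD' := momentNormSq_nonneg k t'
  have hlast := congrArg (· (Fin.last k)) h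
  have hfirst := congrArg (· (⟨0, by omega⟩ : Fin k).castSucc) h
  simp only [sphereMomentCurve, Fin.snoc_last, Fin.snoc_castSucc] at hlast hfirst
  have hM : momentNormSq k t = momentNormSq k t' := by
    field_simp at hlast
    linarith
  rw [hM] at hfirst
  field_simp at hfirst
  simpa using hfirst

end SphereMomentCurve

theorem finite_range_sphereMomentCurve_inter_affineSpan {k : ℕ} (hk : k ≠ 0)
    (T : Finset (EuclideanSpace ℝ (Fin (k + 1)))) (hT : #T ≤ k + 1) :
    (Set.range (sphereMomentCurve k) ∩
      (affineSpan ℝ (T : Set (EuclideanSpace ℝ (Fin (k + 1)))) : Set _)).Finite := by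
  obtain ⟨u, hu, a, ha⟩ :=
    exists_ne_zero_forall_inner_eq_of_card_le T (by rwa [finrank_euclideanSpace_fin])
  refine ((finite_setOf_inner_sphereMomentCurve_eq hk hu a).image
    (sphereMomentCurve k)).subset ?_
  rintro _ ⟨⟨t, rfl⟩, ht⟩
  exact ⟨t, ha _ ht, rfl⟩

theorem realizableOnSphere_of_card_le {m n k : ℕ} (hk : k ≠ 0) (H : Fin n → Finset (Fin m))
    (hH : ∀ l, #(H l) ≤ k + 1) : RealizableOnSphere m n k H := by
  classical
  have hC := Set.infinite_range_of_injective (sphereMomentCurve_injective hk)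
  obtain ⟨S, hSC, hSm, hS⟩ :=
    hC.exists_affineGeneralPosition_subset (finite_range_sphereMomentCurve_inter_affineSpan hk) m
  let x (i : Fin m) : EuclideanSpace ℝ (Fin (k + 1)) := S.equivFin.symm (i.cast hSm.symm)
  have hx_inj : Function.Injective x :=
    Subtype.val_injective.comp (S.equivFin.symm.injective.comp (Fin.cast_injective _))
  refine ⟨x, hx_inj, fun i => ?_, fun l i hi => ?_⟩
  · obtain ⟨t, ht⟩ := hSC (S.equivFin.symm (i.cast hSm.symm)).2
    simpa only [x, ← ht] using sphereMomentCurve_mem_sphere k t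
  · rw [← coe_image]
    refine hS _ (fun p hp => ?_) (card_image_le.trans (hH l)) _ (coe_mem _) fun hxi => ?_
    · obtain ⟨j, -, rfl⟩ := mem_image.1 hp
      exact coe_mem _
    · obtain ⟨j, hj, hji⟩ := mem_image.1 hxi
      exact hi (hx_inj hji ▸ hj)

theorem AffineMap.apply_mem_affineSpan_image {k V₁ P₁ V₂ P₂ : Type*} [Ring k]
    [AddCommGroup V₁] [Module k V₁] [AddTorsor V₁ P₁]
    [AddCommGroup V₂] [Module k V₂] [AddTorsor V₂ P₂] (f : P₁ →ᵃ[k] P₂) {s : Set P₁} {p : P₁}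
    (hp : p ∈ affineSpan k s) : f p ∈ affineSpan k (f '' s) := by
  rw [← AffineSubspace.map_span]
  exact AffineSubspace.mem_map.2 ⟨p, hp, rfl⟩

def EuclideanSpace.dropLast (n : ℕ) :
    EuclideanSpace ℝ (Fin (n + 1)) →ₗ[ℝ] EuclideanSpace ℝ (Fin n) where
  toFun z := WithLp.toLp 2 fun j => z j.castSucc
  map_add' _ _ := rfl
  map_smul' _ _ := rfl

@[simp]
theorem EuclideanSpace.dropLast_apply {n : ℕ} (z : EuclideanSpace ℝ (Fin (n + 1))) (j : Fin n) :
    dropLast n z j = z j.castSucc :=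
  rfl

theorem RealizableOnSphere.lift {m n k : ℕ} {H : Fin (n + 1) → Finset (Fin m)}
    (h : RealizableOnSphere m n k fun l => H l.castSucc) :
    RealizableOnSphere m (n + 1) (k + 1) H := by
  obtain ⟨y, hy_inj, hy_sphere, hy⟩ := h
  let height (i : Fin m) : ℝ := if i ∈ H (Fin.last n) then 4 / 5 else -(4 / 5)
  let x (i : Fin m) : EuclideanSpace ℝ (Fin (k + 2)) :=
    WithLp.toLp 2 (Fin.snoc ((3 / 5 : ℝ) • y i).ofLp (height i))
  let π := ((5 / 3 : ℝ) • EuclideanSpace.dropLast (k + 1)).toAffineMap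
  have hπ (i : Fin m) : π (x i) = y i := by
    ext j
    simp only [π, x, LinearMap.coe_toAffineMap, LinearMap.smul_apply, PiLp.smul_apply,
      EuclideanSpace.dropLast_apply, Fin.snoc_castSucc, smul_eq_mul]
    ring
  let last := (EuclideanSpace.proj (Fin.last (k + 1)) : _ →L[ℝ] ℝ).toLinearMap.toAffineMap
  have hlast (i : Fin m) : last (x i) = height i := by simp [last, x]
  refine ⟨x, fun i j hij => hy_inj (by rw [← hπ i, ← hπ j, hij]), fun i => ?_,
    fun l i hi hmem => ?_⟩
  · have hyi := (EuclideanSpace.mem_sphere_zero_iff_sum_sq _).1 (hy_sphere i)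
    rw [EuclideanSpace.mem_sphere_zero_iff_sum_sq, Fin.sum_univ_castSucc]
    simp only [x, PiLp.smul_apply, Fin.snoc_castSucc, Fin.snoc_last, smul_eq_mul, mul_pow,
      ← mul_sum, hyi]
    by_cases hiL : i ∈ H (Fin.last n) <;> simp only [height, hiL, if_true, if_false] <;> norm_num
  · induction l using Fin.lastCases with
    | cast l =>
      refine hy l i hi ?_
      simpa [Set.image_image, hπ] using π.apply_mem_affineSpan_image hmem
    | last =>
      have hL : last '' (x '' H (Fin.last n)) ⊆ {4 / 5} := by
        rintro _ ⟨_, ⟨j, hj, rfl⟩, rfl⟩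
        simp [hlast, height, mem_coe.1 hj]
      have h := affineSpan_mono ℝ hL (last.apply_mem_affineSpan_image hmem)
      rw [AffineSubspace.mem_affineSpan_singleton, hlast] at h
      norm_num [height, hi] at h

theorem ne_zero_of_add_three_lt_choose_two {s k : ℕ} (h : s + 3 < (k + 3).choose 2) :
    k ≠ 0 := by
  rintro rfl
  simp at h

theorem realizableOnSphere_of_sum_card_add_three_lt {m n k : ℕ} (H : Fin n → Finset (Fin m))
    (hmono : Monotone fun l => #(H l)) (hsum : ∑ l, #(H l) + 3 < (k + 3).choose 2) :
    RealizableOnSphere m n k H := by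
  have hk := ne_zero_of_add_three_lt_choose_two hsum
  induction n generalizing k with
  | zero => exact realizableOnSphere_of_card_le hk H (fun l => l.elim0)
  | succ n ih =>
    by_cases hsmall : #(H (Fin.last n)) ≤ k + 1
    · exact realizableOnSphere_of_card_le hk H fun l => (hmono (Fin.le_last l)).trans hsmall
    obtain ⟨k, rfl⟩ := Nat.exists_eq_add_one_of_ne_zero hk
    have hchoose : (k + 1 + 3).choose 2 = (k + 3).choose 2 + (k + 3) := by
      rw [Nat.choose_succ_succ', Nat.choose_one_right, add_comm]
    have hsum' : ∑ l : Fin n, #(H l.castSucc) + 3 < (k + 3).choose 2 := by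
      rw [Fin.sum_univ_castSucc] at hsum
      omega
    exact (ih _ (hmono.comp Fin.strictMono_castSucc.monotone) hsum'
      (ne_zero_of_add_three_lt_choose_two hsum')).lift

/-- Lemma 1: if the index sets `H_1,…,H_n ⊆ {1,…,m}` have nondecreasing
sizes and `(B, H)` is not realizable on a `k`-dimensional sphere, then
`Σ |H_i| ≥ C(k+3,2) - 3`. -/
theorem stmt_19 (m n k : ℕ) (H : Fin n → Finset (Fin m))
    (hmono : ∀ i j : Fin n, i ≤ j → (H i).card ≤ (H j).card)
    (hnr : ¬ RealizableOnSphere m n k H) :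
    Nat.choose (k + 3) 2 - 3 ≤ ∑ i : Fin n, (H i).card := by
  by_contra hlt
  exact hnr (realizableOnSphere_of_sum_card_add_three_lt H (fun i j hij => hmono i j hij)
    (by omega))
end
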